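/- arXiv:2404.13503 — 10 statements merged into one kernel-verified Lean document; each statement's English description precedes it below -/
import Mathlib

section
/- Any twice differentiable Bregman divergence decomposes as an integral of V-shaped Bregman divergences: for u : [0,1] → [0,1] twice differentiable convex and any p, p̂ ∈ [0,1], u(p̂) − u(p) + u'(p)(p − p̂) = ∫_0^1 u''(μ) · max(1−μ, μ) · VBreg_μ(p, p̂) dμ, where VBreg_μ(q, q̂) = 0 if q and q̂ are on the same side of μ (i.e., q < μ and q̂ ≤ μ, or q ≥ μ and q̂ ≥ μ), and VBreg_μ(q, q̂) = |q̂ − μ| / max(1−μ, μ) otherwise. -/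
/-!
Taylor's formula with integral remainder writes the Bregman divergence of `u` as
`∫ μ in p..p̂, u'' μ * (p̂ - μ)`, i.e. as the integral of `u'' μ * |p̂ - μ|` over the points `μ`
separating `p` from `p̂`. Away from those points `VBreg μ p p̂` vanishes, and on them
`max (1 - μ) μ * VBreg μ p p̂ = |p̂ - μ|`. Convexity makes `u''` nonnegative, which is what
makes `u''` integrable.
-/

/-- The V-Bregman divergence with kink μ. -/
noncomputable def VBreg (μ q qh : ℝ) : ℝ :=
  if (q < μ ∧ qh ≤ μ) ∨ (μ ≤ q ∧ μ ≤ qh) then 0 else |qh - μ| / max (1 - μ) μ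

open Set MeasureTheory intervalIntegral
open scoped Interval

lemma ConvexOn.monotoneOn_of_hasDerivWithinAt {S : Set ℝ} {f f' : ℝ → ℝ}
    (hf : ConvexOn ℝ S f) (hd : ∀ x ∈ S, HasDerivWithinAt f (f' x) S x) :
    MonotoneOn f' S := by
  intro x hx y hy hxy
  rcases hxy.eq_or_lt with rfl | hlt
  · rfl
  exact (hf.le_slope_of_hasDerivWithinAt hx hy hlt (hd x hx)).trans
    (hf.slope_le_of_hasDerivWithinAt hx hy hlt (hd y hy))

lemma integral_mul_sub_eq_of_hasDerivAt {u u' u'' : ℝ → ℝ} {a b : ℝ}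
    (hu : ContinuousOn u (uIcc a b)) (hu' : ContinuousOn u' (uIcc a b))
    (hd1 : ∀ x ∈ Ioo (min a b) (max a b), HasDerivAt u (u' x) x)
    (hd2 : ∀ x ∈ Ioo (min a b) (max a b), HasDerivAt u' (u'' x) x)
    (hint : IntervalIntegrable u'' volume a b) :
    ∫ x in a..b, u'' x * (b - x) = u b - u a + u' a * (a - b) := by
  have hF : ∀ x ∈ Ioo (min a b) (max a b),
      HasDerivWithinAt (fun x => (b - x) * u' x + u x) (u'' x * (b - x)) (Ioi x) x := by
    intro x hx
    exact ((((hasDerivAt_id x).const_sub b).mul (hd2 x hx)).add (hd1 x hx)).hasDerivWithinAt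
      |>.congr_deriv (by simp only [id_eq]; ring)
  rw [integral_eq_sub_of_hasDeriv_right
    (((continuous_const.sub continuous_id).continuousOn.mul hu').add hu) hF
    (hint.mul_continuousOn (continuous_const.sub continuous_id).continuousOn)]
  simp only [Pi.add_apply, Pi.mul_apply, Pi.sub_apply, id_eq, sub_self, zero_mul, zero_add]
  ring

lemma ConvexOn.bregman_eq_integral {u u' u'' : ℝ → ℝ} {a b p q : ℝ}
    (hconv : ConvexOn ℝ (Icc a b) u)
    (hd1 : ∀ x ∈ Icc a b, HasDerivWithinAt u (u' x) (Icc a b) x)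
    (hd2 : ∀ x ∈ Icc a b, HasDerivWithinAt u' (u'' x) (Icc a b) x)
    (hp : p ∈ Icc a b) (hq : q ∈ Icc a b) :
    u q - u p + u' p * (p - q) = ∫ x in p..q, u'' x * (q - x) := by
  have hsub : uIcc p q ⊆ Icc a b := uIcc_subset_Icc hp hq
  have hnhds : ∀ x ∈ Ioo (min p q) (max p q), Icc a b ∈ nhds x := fun x hx =>
    Icc_mem_nhds ((le_min hp.1 hq.1).trans_lt hx.1) (hx.2.trans_le (max_le hp.2 hq.2))
  have hu : ContinuousOn u (uIcc p q) :=
    fun x hx => ((hd1 x (hsub hx)).continuousWithinAt).mono hsub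
  have hu' : ContinuousOn u' (uIcc p q) :=
    fun x hx => ((hd2 x (hsub hx)).continuousWithinAt).mono hsub
  have hd1' : ∀ x ∈ Ioo (min p q) (max p q), HasDerivAt u (u' x) x := fun x hx =>
    (hd1 x (hsub (Ioo_subset_Icc_self hx))).hasDerivAt (hnhds x hx)
  have hd2' : ∀ x ∈ Ioo (min p q) (max p q), HasDerivAt u' (u'' x) x := fun x hx =>
    (hd2 x (hsub (Ioo_subset_Icc_self hx))).hasDerivAt (hnhds x hx)
  have hmono : MonotoneOn u' (Ioo (min p q) (max p q)) :=
    (hconv.monotoneOn_of_hasDerivWithinAt hd1).mono (Ioo_subset_Icc_self.trans hsub)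
  have hnonneg : ∀ x ∈ Ioo (min p q) (max p q), 0 ≤ u'' x := fun x hx =>
    (hd2' x hx).hasDerivWithinAt.nonneg_of_monotoneOn (isOpen_Ioo.preperfect x hx) hmono
  rw [integral_mul_sub_eq_of_hasDerivAt hu hu' hd1' hd2'
    (intervalIntegrable_deriv_of_nonneg hu' hd2' hnonneg)]

lemma max_mul_VBreg_eq_indicator (μ q qh : ℝ) :
    max (1 - μ) μ * VBreg μ q qh = (Ι q qh).indicator (fun ν => |qh - ν|) μ := by
  have hpos : 0 < max (1 - μ) μ := by
    rcases lt_or_ge 0 μ with h | h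
    · exact lt_max_of_lt_right h
    · exact lt_max_of_lt_left (by linarith)
  unfold VBreg
  split_ifs with hside
  · rw [mul_zero, eq_comm, indicator_apply_eq_zero]
    intro hμ
    rcases mem_uIoc.mp hμ with ⟨h1, h2⟩ | ⟨h1, h2⟩ <;>
      rcases hside with ⟨h3, h4⟩ | ⟨h3, h4⟩ <;>
      simp [show μ = qh by linarith]
  · push Not at hside
    have hμ : μ ∈ Ι q qh := by
      rcases le_or_gt μ q with h | h
      · exact mem_uIoc.mpr (Or.inr ⟨hside.2 h, h⟩)
      · exact mem_uIoc.mpr (Or.inl ⟨h, (hside.1 h).le⟩)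
    rw [indicator_of_mem hμ, mul_div_cancel₀ _ hpos.ne']

lemma setIntegral_uIoc_mul_abs_sub (f : ℝ → ℝ) (a b : ℝ) :
    ∫ x in Ι a b, f x * |b - x| = ∫ x in a..b, f x * (b - x) := by
  rcases le_total a b with h | h
  · rw [uIoc_of_le h, integral_of_le h]
    refine setIntegral_congr_fun measurableSet_Ioc fun x hx => ?_
    rw [abs_of_nonneg (sub_nonneg.mpr hx.2)]
  · rw [uIoc_of_ge h, integral_symm, integral_of_le h, ← MeasureTheory.integral_neg]
    refine setIntegral_congr_fun measurableSet_Ioc fun x hx => ?_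
    rw [abs_of_nonpos (by linarith [hx.1])]
    ring

theorem stmt_4_general (u u' u'' : ℝ → ℝ)
    (hconv : ConvexOn ℝ (Set.Icc (0:ℝ) 1) u)
    (hd1 : ∀ x ∈ Set.Icc (0:ℝ) 1, HasDerivWithinAt u (u' x) (Set.Icc (0:ℝ) 1) x)
    (hd2 : ∀ x ∈ Set.Icc (0:ℝ) 1, HasDerivWithinAt u' (u'' x) (Set.Icc (0:ℝ) 1) x)
    (p ph : ℝ) (hp : p ∈ Set.Icc (0:ℝ) 1) (hph : ph ∈ Set.Icc (0:ℝ) 1) :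
    u ph - u p + u' p * (p - ph)
      = ∫ μ in (0:ℝ)..1, u'' μ * max (1 - μ) μ * VBreg μ p ph := by
  have hsub : Ι p ph ⊆ Ioc 0 1 := fun x hx =>
    ⟨(le_min hp.1 hph.1).trans_lt hx.1, hx.2.trans (max_le hp.2 hph.2)⟩
  have hintegrand : (fun μ => u'' μ * max (1 - μ) μ * VBreg μ p ph)
      = (Ι p ph).indicator (fun μ => u'' μ * |ph - μ|) := by
    ext μ
    rw [mul_assoc, max_mul_VBreg_eq_indicator, ← indicator_mul_right]
  rw [hintegrand, integral_of_le zero_le_one, setIntegral_indicator measurableSet_uIoc,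
    inter_eq_right.mpr hsub, setIntegral_uIoc_mul_abs_sub,
    hconv.bregman_eq_integral hd1 hd2 hp hph]

/-- Any twice differentiable Bregman divergence decomposes as an
integral of V-shaped Bregman divergences. -/
theorem stmt_4 (u u' u'' : ℝ → ℝ)
    (hconv : ConvexOn ℝ (Set.Icc (0:ℝ) 1) u)
    (hrange : ∀ x ∈ Set.Icc (0:ℝ) 1, u x ∈ Set.Icc (0:ℝ) 1)
    (hd1 : ∀ x ∈ Set.Icc (0:ℝ) 1, HasDerivWithinAt u (u' x) (Set.Icc (0:ℝ) 1) x)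
    (hd2 : ∀ x ∈ Set.Icc (0:ℝ) 1, HasDerivWithinAt u' (u'' x) (Set.Icc (0:ℝ) 1) x)
    (p ph : ℝ) (hp : p ∈ Set.Icc (0:ℝ) 1) (hph : ph ∈ Set.Icc (0:ℝ) 1) :
    u ph - u p + u' p * (p - ph)
      = ∫ μ in (0:ℝ)..1, u'' μ * max (1 - μ) μ * VBreg μ p ph :=
  stmt_4_general u u' u'' hconv hd1 hd2 p ph hp hph
end

section
/- The V-shaped calibration decision loss is a 2-approximation of the full calibration decision loss: for any sequences of predictions p_1,…,p_T ∈ [0,1] (taking finitely many values) and states θ_1,…,θ_T ∈ {0,1}, VCDL(p⃗, θ⃗) ≤ CDL(p⃗, θ⃗) ≤ 2·VCDL(p⃗, θ⃗). -/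
/-- A proper scoring rule on binary states: reporting the true Bernoulli parameter
maximizes the expected score. -/
def ProperRule (S : ℝ → ℝ → ℝ) : Prop :=
  ∀ p ∈ Set.Icc (0:ℝ) 1, ∀ p' ∈ Set.Icc (0:ℝ) 1,
    (1 - p) * S p' 0 + p * S p' 1 ≤ (1 - p) * S p 0 + p * S p 1

/-- A scoring rule with range bounded in [0,1]. -/
def BddRule (S : ℝ → ℝ → ℝ) : Prop :=
  ∀ p ∈ Set.Icc (0:ℝ) 1, S p 0 ∈ Set.Icc (0:ℝ) 1 ∧ S p 1 ∈ Set.Icc (0:ℝ) 1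

namespace Stmt5Aux


lemma half_le_max (μ : ℝ) : (1:ℝ)/2 ≤ max (1 - μ) μ := by
  rcases le_total μ (1/2) with h | h
  · exact le_max_of_le_left (by linarith)
  · exact le_max_of_le_right h

lemma max_pos (μ : ℝ) : 0 < max (1 - μ) μ :=
  lt_of_lt_of_le (by norm_num) (half_le_max μ)

lemma VBreg_nonneg (μ q qh : ℝ) : 0 ≤ VBreg μ q qh := by
  unfold VBreg
  split
  · exact le_refl 0
  · exact div_nonneg (abs_nonneg _) (max_pos μ).le

lemma VBreg_le_two (μ q qh : ℝ) (hμ : μ ∈ Set.Icc (0:ℝ) 1) (hqh : qh ∈ Set.Icc (0:ℝ) 1) :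
    VBreg μ q qh ≤ 2 := by
  unfold VBreg
  split
  · norm_num
  · have h1 : |qh - μ| ≤ 1 := by
      rw [abs_le]; constructor <;> [linarith [hμ.2, hqh.1]; linarith [hμ.1, hqh.2]]
    have h2 := half_le_max μ
    have h3 := max_pos μ
    rw [div_le_iff₀ h3]
    nlinarith

lemma sum_Icc_sub (F : ℕ → ℝ) (a d : ℕ) :
    ∑ l ∈ Finset.Icc (a+1) (a+d), (F l - F (l-1)) = F (a+d) - F a := by
  induction d with
  | zero => simp
  | succ d ih =>
      rw [show a + (d+1) = (a+d)+1 from rfl, Finset.sum_Icc_succ_top (by omega), ih]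
      have : a + d + 1 - 1 = a + d := by omega
      rw [this]
      ring

lemma chainInc (G S u : ℕ → ℝ)
    (hsub : ∀ j k : ℕ, G j + S j * (u k - u j) ≤ G k) (a d : ℕ) :
    G (a+d) - G a - S a * (u (a+d) - u a) ≤
      ∑ l ∈ Finset.Icc (a+1) (a+d), (S l - S (l-1)) * (u (a+d) - u (l-1)) := by
  induction d with
  | zero => simp
  | succ d ih =>
    have tel : ∑ l ∈ Finset.Icc (a+1) (a+d), (S l - S (l-1)) = S (a+d) - S a :=
      sum_Icc_sub S a d
    have split : ∑ l ∈ Finset.Icc (a+1) (a+d), (S l - S (l-1)) * (u (a+d+1) - u (l-1))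
        = (∑ l ∈ Finset.Icc (a+1) (a+d), (S l - S (l-1)) * (u (a+d) - u (l-1)))
          + (S (a+d) - S a) * (u (a+d+1) - u (a+d)) := by
      rw [← tel, Finset.sum_mul, ← Finset.sum_add_distrib]
      exact Finset.sum_congr rfl fun l _ => by ring
    have h1 := hsub (a+d+1) (a+d)
    rw [show a + (d+1) = (a+d)+1 from rfl, Finset.sum_Icc_succ_top (by omega), split]
    have h2 : a + d + 1 - 1 = a + d := by omega
    rw [h2]
    nlinarith [ih, h1]

lemma chainDec (G S u : ℕ → ℝ)
    (hsub : ∀ j k : ℕ, G j + S j * (u k - u j) ≤ G k) (a d : ℕ) :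
    G a - G (a+d) - S (a+d) * (u a - u (a+d)) ≤
      ∑ l ∈ Finset.Icc (a+1) (a+d), (S l - S (l-1)) * (u l - u a) := by
  induction d with
  | zero => simp
  | succ d ih =>
    have h1 := hsub (a+d) (a+d+1)
    rw [show a + (d+1) = (a+d)+1 from rfl, Finset.sum_Icc_succ_top (by omega)]
    have h2 : a + d + 1 - 1 = a + d := by omega
    rw [h2]
    nlinarith [ih, h1]




set_option maxHeartbeats 2000000 in
lemma core {m : ℕ} (q qh : Fin m → ℝ) (n : Fin m → ℕ)
    (hq : ∀ i, q i ∈ Set.Icc (0:ℝ) 1) (hqh : ∀ i, qh i ∈ Set.Icc (0:ℝ) 1)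
    (g s : ℝ → ℝ)
    (hsub : ∀ x ∈ Set.Icc (0:ℝ) 1, ∀ y ∈ Set.Icc (0:ℝ) 1, g x + s x * (y - x) ≤ g y)
    (hs0 : -1 ≤ s 0) (hs1 : s 1 ≤ 1)
    (B : ℝ) (hB : 0 ≤ B)
    (hVB : ∀ μ ∈ Set.Icc (0:ℝ) 1, ∑ i, (n i : ℝ) * VBreg μ (q i) (qh i) ≤ B)
    (N : ℕ) (hN : 0 < N) :
    ∑ i, (n i : ℝ) * (g (qh i) - g (q i) - s (q i) * (qh i - q i))
      ≤ 2 * B + (∑ i, (n i : ℝ)) / N := by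
  classical
  have hNR : (0:ℝ) < N := by exact_mod_cast hN
  set P : Finset ℝ := ((Finset.range (N+1)).image (fun j : ℕ => (j:ℝ)/(N:ℝ))) ∪
      (Finset.image q Finset.univ ∪ Finset.image qh Finset.univ) with hP
  have hgridP : ∀ j : ℕ, j ≤ N → ((j:ℝ)/(N:ℝ)) ∈ P := by
    intro j hj
    apply Finset.mem_union_left
    exact Finset.mem_image.mpr ⟨j, Finset.mem_range.mpr (by omega), rfl⟩
  have hP01 : ∀ x ∈ P, x ∈ Set.Icc (0:ℝ) 1 := by
    intro x hx
    simp only [hP, Finset.mem_union, Finset.mem_image, Finset.mem_range,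
      Finset.mem_univ, true_and] at hx
    rcases hx with ⟨j, hj, rfl⟩ | ⟨i, rfl⟩ | ⟨i, rfl⟩
    · constructor
      · positivity
      · rw [div_le_one hNR]; exact_mod_cast Nat.lt_succ_iff.mp hj
    · exact hq i
    · exact hqh i
  have h0P : (0:ℝ) ∈ P := by
    have := hgridP 0 (Nat.zero_le N); simpa using this
  have h1P : (1:ℝ) ∈ P := by
    have := hgridP N le_rfl
    rwa [div_self (ne_of_gt hNR)] at this
  have hqP : ∀ i, q i ∈ P := fun i =>
    Finset.mem_union_right _ (Finset.mem_union_left _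
      (Finset.mem_image.mpr ⟨i, Finset.mem_univ i, rfl⟩))
  have hqhP : ∀ i, qh i ∈ P := fun i =>
    Finset.mem_union_right _ (Finset.mem_union_right _
      (Finset.mem_image.mpr ⟨i, Finset.mem_univ i, rfl⟩))
  set K := P.card with hKdef
  have hK : 0 < K := Finset.card_pos.mpr ⟨0, h0P⟩
  set e := P.orderIsoOfFin rfl with he
  set u : ℕ → ℝ := fun l => if h : l < K then (e ⟨l, h⟩ : ℝ) else 1 with hu
  have humem : ∀ l, u l ∈ P := by
    intro l
    simp only [hu]
    split
    · exact (e _).2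
    · exact h1P
  have hu01 : ∀ l, u l ∈ Set.Icc (0:ℝ) 1 := fun l => hP01 _ (humem l)
  have humono : ∀ j l : ℕ, j < K → l < K → j < l → u j < u l := by
    intro j l hj hl hjl
    simp only [hu, dif_pos hj, dif_pos hl]
    exact Subtype.coe_lt_coe.mpr (e.lt_iff_lt.mpr (Fin.mk_lt_mk.mpr hjl))
  have humono' : ∀ j l : ℕ, j < K → l < K → j ≤ l → u j ≤ u l := by
    intro j l hj hl hjl
    rcases eq_or_lt_of_le hjl with rfl | h
    · exact le_refl _
    · exact (humono j l hj hl h).le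
  have hureflect : ∀ j l : ℕ, j < K → l < K → u j < u l → j < l := by
    intro j l hj hl h
    by_contra hc
    push_neg at hc
    exact absurd (humono' l j hl hj hc) (not_le.mpr h)
  set idx : ℝ → ℕ := fun x => if h : x ∈ P then (e.symm ⟨x, h⟩ : Fin K).val else 0 with hidx
  have hidx1 : ∀ x ∈ P, idx x < K := by
    intro x hx; simp only [hidx, dif_pos hx]; exact (e.symm ⟨x, hx⟩).isLt
  have hidx2 : ∀ x ∈ P, u (idx x) = x := by
    intro x hx
    simp only [hidx, dif_pos hx, hu]
    rw [dif_pos (e.symm ⟨x, hx⟩).isLt]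
    have : (⟨(e.symm ⟨x, hx⟩ : Fin K).val, (e.symm ⟨x, hx⟩).isLt⟩ : Fin K) = e.symm ⟨x, hx⟩ :=
      Fin.eta _ _
    rw [this, e.apply_symm_apply]
  have hidxmono : ∀ x ∈ P, ∀ y ∈ P, x ≤ y → idx x ≤ idx y := by
    intro x hx y hy hxy
    by_contra hc
    push_neg at hc
    have := humono _ _ (hidx1 y hy) (hidx1 x hx) hc
    rw [hidx2 x hx, hidx2 y hy] at this
    linarith
  have hu0 : u 0 = 0 := by
    have h1 : u 0 ≤ u (idx 0) :=
      humono' 0 (idx 0) hK (hidx1 0 h0P) (Nat.zero_le _)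
    rw [hidx2 0 h0P] at h1
    exact le_antisymm h1 (hu01 0).1
  have huK : u (K-1) = 1 := by
    have h1 : u (idx 1) ≤ u (K-1) :=
      humono' (idx 1) (K-1) (hidx1 1 h1P) (by omega) (by have := hidx1 1 h1P; omega)
    rw [hidx2 1 h1P] at h1
    exact le_antisymm (hu01 _).2 h1
  have hconsec : ∀ l, l + 1 < K → ∀ x ∈ P, ¬(u l < x ∧ x < u (l+1)) := by
    intro l hl x hx ⟨hx1, hx2⟩
    rw [← hidx2 x hx] at hx1 hx2
    have c1 := hureflect _ _ (by omega) (hidx1 x hx) hx1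
    have c2 := hureflect _ _ (hidx1 x hx) hl hx2
    omega
  have hmesh : ∀ l, l + 1 < K → u (l+1) - u l ≤ 1 / N := by
    intro l hl
    by_contra hc
    push_neg at hc
    have hul0 : 0 ≤ u l := (hu01 l).1
    have hul1 : u (l+1) ≤ 1 := (hu01 (l+1)).2
    have hNpos : 0 < 1/(N:ℝ) := by positivity
    have hlt1 : u l < 1 := by linarith
    set j : ℕ := ⌊u l * N⌋₊ + 1 with hj
    have hjN : j ≤ N := by
      have : ⌊u l * N⌋₊ < N := by
        rw [Nat.floor_lt (by positivity)]
        nlinarith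
      omega
    have hgt : u l < (j:ℝ)/N := by
      rw [lt_div_iff₀ hNR]
      have := Nat.lt_floor_add_one (u l * N)
      push_cast [hj]
      push_cast at this
      linarith
    have hlt : (j:ℝ)/N < u (l+1) := by
      rw [div_lt_iff₀ hNR]
      have hfl := Nat.floor_le (show (0:ℝ) ≤ u l * N by positivity)
      have key : (1:ℝ) < (u (l+1) - u l) * N := by
        have h := mul_lt_mul_of_pos_right hc hNR
        rwa [one_div, inv_mul_cancel₀ (ne_of_gt hNR)] at h
      have key2 : (u (l+1) - u l) * N = u (l+1)*N - u l * N := by ring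
      push_cast [hj]
      linarith
    exact hconsec l hl _ (hgridP j hjN) ⟨hgt, hlt⟩
  -- the weight function
  set w : ℕ → Fin m → ℝ := fun l i =>
    if idx (q i) < l ∧ l ≤ idx (qh i) then qh i - u (l-1)
    else if idx (qh i) < l ∧ l ≤ idx (q i) then u l - qh i
    else 0 with hw
  have hsub' : ∀ j k : ℕ, g (u j) + s (u j) * (u k - u j) ≤ g (u k) :=
    fun j k => hsub _ (hu01 j) _ (hu01 k)
  have claim1 : ∀ i, g (qh i) - g (q i) - s (q i) * (qh i - q i) ≤
      ∑ l ∈ Finset.Icc 1 (K-1), (s (u l) - s (u (l-1))) * w l i := by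
    intro i
    have ha : idx (q i) < K := hidx1 _ (hqP i)
    have hb : idx (qh i) < K := hidx1 _ (hqhP i)
    have hua : u (idx (q i)) = q i := hidx2 _ (hqP i)
    have hub : u (idx (qh i)) = qh i := hidx2 _ (hqhP i)
    rcases le_total (q i) (qh i) with hle | hle
    · -- increasing case
      have hab : idx (q i) ≤ idx (qh i) := hidxmono _ (hqP i) _ (hqhP i) hle
      have hch := chainInc (fun l => g (u l)) (fun l => s (u l)) u hsub'
        (idx (q i)) (idx (qh i) - idx (q i))
      rw [Nat.add_sub_cancel' hab] at hch
      simp only [hua, hub] at hch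
      refine hch.trans (le_of_eq ?_)
      have step1 : ∀ l ∈ Finset.Icc (idx (q i) + 1) (idx (qh i)),
          (s (u l) - s (u (l-1))) * (qh i - u (l-1)) = (s (u l) - s (u (l-1))) * w l i := by
        intro l hl
        rw [Finset.mem_Icc] at hl
        have hcond : idx (q i) < l ∧ l ≤ idx (qh i) := ⟨by omega, hl.2⟩
        simp only [hw, if_pos hcond]
      rw [Finset.sum_congr rfl step1]
      apply Finset.sum_subset
      · intro l hl
        rw [Finset.mem_Icc] at *
        omega
      · intro l hl hnl
        rw [Finset.mem_Icc] at hl hnl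
        have h1 : ¬(idx (q i) < l ∧ l ≤ idx (qh i)) := by omega
        have h2 : ¬(idx (qh i) < l ∧ l ≤ idx (q i)) := by omega
        simp only [hw, if_neg h1, if_neg h2, mul_zero]
    · -- decreasing case
      have hab : idx (qh i) ≤ idx (q i) := hidxmono _ (hqhP i) _ (hqP i) hle
      have hch := chainDec (fun l => g (u l)) (fun l => s (u l)) u hsub'
        (idx (qh i)) (idx (q i) - idx (qh i))
      rw [Nat.add_sub_cancel' hab] at hch
      simp only [hua, hub] at hch
      refine hch.trans (le_of_eq ?_)
      have step1 : ∀ l ∈ Finset.Icc (idx (qh i) + 1) (idx (q i)),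
          (s (u l) - s (u (l-1))) * (u l - qh i) = (s (u l) - s (u (l-1))) * w l i := by
        intro l hl
        rw [Finset.mem_Icc] at hl
        have h1 : ¬(idx (q i) < l ∧ l ≤ idx (qh i)) := by omega
        have hcond : idx (qh i) < l ∧ l ≤ idx (q i) := ⟨by omega, hl.2⟩
        simp only [hw, if_neg h1, if_pos hcond]
      rw [Finset.sum_congr rfl step1]
      apply Finset.sum_subset
      · intro l hl
        rw [Finset.mem_Icc] at *
        omega
      · intro l hl hnl
        rw [Finset.mem_Icc] at hl hnl
        have h1 : ¬(idx (q i) < l ∧ l ≤ idx (qh i)) := by omega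
        have h2 : ¬(idx (qh i) < l ∧ l ≤ idx (q i)) := by omega
        simp only [hw, if_neg h1, if_neg h2, mul_zero]
  -- monotonicity of s
  have smono : ∀ x ∈ Set.Icc (0:ℝ) 1, ∀ y ∈ Set.Icc (0:ℝ) 1, x ≤ y → s x ≤ s y := by
    intro x hx y hy hxy
    rcases eq_or_lt_of_le hxy with rfl | hlt
    · exact le_refl _
    · have h1 := hsub x hx y hy
      have h2 := hsub y hy x hx
      by_contra hcon
      push_neg at hcon
      nlinarith [mul_pos (sub_pos.mpr hcon) (sub_pos.mpr hlt)]
  have hTnn : (0:ℝ) ≤ ∑ i, (n i : ℝ) :=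
    Finset.sum_nonneg fun i _ => Nat.cast_nonneg _
  -- per interval bound
  have claim2 : ∀ l ∈ Finset.Icc 1 (K-1),
      ∑ i, (n i : ℝ) * w l i ≤ B + (∑ i, (n i : ℝ)) * (1/(2*N)) := by
    intro l hl
    rw [Finset.mem_Icc] at hl
    have hlK : l < K := by omega
    have hl1K : l - 1 < K := by omega
    have hll : u (l-1) < u l := humono _ _ hl1K hlK (by omega)
    set μ : ℝ := (u (l-1) + u l) / 2 with hμdef
    have hμ1 : u (l-1) < μ := by rw [hμdef]; linarith
    have hμ2 : μ < u l := by rw [hμdef]; linarith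
    have hμ01 : μ ∈ Set.Icc (0:ℝ) 1 :=
      ⟨le_trans (hu01 (l-1)).1 hμ1.le, le_trans hμ2.le (hu01 l).2⟩
    have hM : (0:ℝ) < max (1 - μ) μ := max_pos μ
    have hM1 : max (1 - μ) μ ≤ 1 := max_le (by linarith [hμ01.1]) hμ01.2
    have hlen : u l - u (l-1) ≤ 1 / N := by
      have h' : (l - 1) + 1 = l := by omega
      have := hmesh (l-1) (by omega)
      rwa [h'] at this
    have hwi : ∀ i, w l i ≤ (max (1 - μ) μ) * VBreg μ (q i) (qh i) + 1/(2*N) := by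
      intro i
      simp only [hw]
      split_ifs with h1 h2
      · -- increasing straddle
        have hqa : q i ≤ u (l-1) := by
          rw [← hidx2 _ (hqP i)]
          exact humono' _ _ (hidx1 _ (hqP i)) hl1K (by omega)
        have hqb : u l ≤ qh i := by
          rw [← hidx2 _ (hqhP i)]
          exact humono' _ _ hlK (hidx1 _ (hqhP i)) h1.2
        have hV : VBreg μ (q i) (qh i) = (qh i - μ) / max (1 - μ) μ := by
          unfold VBreg
          rw [if_neg, abs_of_nonneg (by linarith)]
          rintro (⟨_, hcc⟩ | ⟨hcc, _⟩) <;> linarith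
        rw [hV, mul_div_cancel₀ _ (ne_of_gt hM)]
        have : μ - u (l-1) = (u l - u (l-1)) / 2 := by rw [hμdef]; ring
        have h2N : (1:ℝ)/(2*N) = (1/N)/2 := by ring
        linarith
      · -- decreasing straddle
        have hqa : qh i ≤ u (l-1) := by
          rw [← hidx2 _ (hqhP i)]
          exact humono' _ _ (hidx1 _ (hqhP i)) hl1K (by omega)
        have hqb : u l ≤ q i := by
          rw [← hidx2 _ (hqP i)]
          exact humono' _ _ hlK (hidx1 _ (hqP i)) h2.2
        have hV : VBreg μ (q i) (qh i) = (μ - qh i) / max (1 - μ) μ := by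
          unfold VBreg
          rw [if_neg, abs_of_nonpos (by linarith), neg_sub]
          rintro (⟨hcc, _⟩ | ⟨_, hcc⟩) <;> linarith
        rw [hV, mul_div_cancel₀ _ (ne_of_gt hM)]
        have : u l - μ = (u l - u (l-1)) / 2 := by rw [hμdef]; ring
        have h2N : (1:ℝ)/(2*N) = (1/N)/2 := by ring
        linarith
      · -- no straddle
        have hv := VBreg_nonneg μ (q i) (qh i)
        have : (0:ℝ) < 1/(2*N) := by positivity
        nlinarith
    calc ∑ i, (n i : ℝ) * w l i
        ≤ ∑ i, (n i : ℝ) * ((max (1 - μ) μ) * VBreg μ (q i) (qh i) + 1/(2*N)) :=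
          Finset.sum_le_sum fun i _ =>
            mul_le_mul_of_nonneg_left (hwi i) (Nat.cast_nonneg _)
      _ = (max (1 - μ) μ) * (∑ i, (n i : ℝ) * VBreg μ (q i) (qh i))
            + (∑ i, (n i : ℝ)) * (1/(2*N)) := by
          rw [Finset.mul_sum, Finset.sum_mul, ← Finset.sum_add_distrib]
          exact Finset.sum_congr rfl fun i _ => by ring
      _ ≤ B + (∑ i, (n i : ℝ)) * (1/(2*N)) := by
          have hVsum : 0 ≤ ∑ i, (n i : ℝ) * VBreg μ (q i) (qh i) :=
            Finset.sum_nonneg fun i _ =>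
              mul_nonneg (Nat.cast_nonneg _) (VBreg_nonneg _ _ _)
          have hMS := mul_le_of_le_one_left hVsum hM1
          linarith [hVB μ hμ01]
  -- assembly
  have step1 : ∑ i, (n i : ℝ) * (g (qh i) - g (q i) - s (q i) * (qh i - q i))
      ≤ ∑ l ∈ Finset.Icc 1 (K-1), (s (u l) - s (u (l-1))) * ∑ i, (n i : ℝ) * w l i := by
    have swap : ∑ i, (n i : ℝ) * ∑ l ∈ Finset.Icc 1 (K-1), (s (u l) - s (u (l-1))) * w l i
        = ∑ l ∈ Finset.Icc 1 (K-1), (s (u l) - s (u (l-1))) * ∑ i, (n i : ℝ) * w l i := by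
      simp_rw [Finset.mul_sum]
      rw [Finset.sum_comm]
      exact Finset.sum_congr rfl fun l _ => Finset.sum_congr rfl fun i _ => by ring
    rw [← swap]
    exact Finset.sum_le_sum fun i _ =>
      mul_le_mul_of_nonneg_left (claim1 i) (Nat.cast_nonneg _)
  have hdnn : ∀ l ∈ Finset.Icc 1 (K-1), 0 ≤ s (u l) - s (u (l-1)) := by
    intro l hl
    rw [Finset.mem_Icc] at hl
    have : u (l-1) ≤ u l := humono' _ _ (by omega) (by omega) (by omega)
    linarith [smono _ (hu01 (l-1)) _ (hu01 l) this]
  have tel : ∑ l ∈ Finset.Icc 1 (K-1), (s (u l) - s (u (l-1))) = s 1 - s 0 := by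
    have := sum_Icc_sub (fun l => s (u l)) 0 (K-1)
    simp only [Nat.zero_add] at this
    rw [this, hu0, huK]
  have hs10 : s 1 - s 0 ≤ 2 := by linarith
  have hs10' : 0 ≤ s 1 - s 0 := by
    have : (0:ℝ) ≤ 1 := by norm_num
    linarith [smono 0 ⟨le_refl _, by norm_num⟩ 1 ⟨by norm_num, le_refl _⟩ this]
  calc ∑ i, (n i : ℝ) * (g (qh i) - g (q i) - s (q i) * (qh i - q i))
      ≤ ∑ l ∈ Finset.Icc 1 (K-1), (s (u l) - s (u (l-1))) * ∑ i, (n i : ℝ) * w l i := step1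
    _ ≤ ∑ l ∈ Finset.Icc 1 (K-1), (s (u l) - s (u (l-1))) * (B + (∑ i, (n i : ℝ)) * (1/(2*N))) :=
        Finset.sum_le_sum fun l hl =>
          mul_le_mul_of_nonneg_left (claim2 l hl) (hdnn l hl)
    _ = (s 1 - s 0) * (B + (∑ i, (n i : ℝ)) * (1/(2*N))) := by
        rw [← Finset.sum_mul, tel]
    _ ≤ 2 * (B + (∑ i, (n i : ℝ)) * (1/(2*N))) := by
        have hpos : 0 ≤ B + (∑ i, (n i : ℝ)) * (1/(2*N)) := by positivity
        exact mul_le_mul_of_nonneg_right hs10 hpos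
    _ = 2 * B + (∑ i, (n i : ℝ)) / N := by
        field_simp




/-- The V-shaped scoring rule with kink μ. -/
noncomputable def Vrule (μ : ℝ) : ℝ → ℝ → ℝ :=
  fun p θ => if μ ≤ p then θ * ((1-μ)/max (1-μ) μ) else (1-θ) * (μ/max (1-μ) μ)

lemma Vrule_apply_pos (μ p θ : ℝ) (h : μ ≤ p) :
    Vrule μ p θ = θ * ((1-μ)/max (1-μ) μ) := if_pos h

lemma Vrule_apply_neg (μ p θ : ℝ) (h : ¬ μ ≤ p) :
    Vrule μ p θ = (1-θ) * (μ/max (1-μ) μ) := if_neg h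

lemma Vrule_proper (μ : ℝ) : ProperRule (Vrule μ) := by
  intro p hp p' hp'
  have hM := max_pos μ
  by_cases h : μ ≤ p <;> by_cases h' : μ ≤ p'
  · rw [Vrule_apply_pos _ _ _ h, Vrule_apply_pos _ _ _ h,
      Vrule_apply_pos _ _ _ h', Vrule_apply_pos _ _ _ h']
  · rw [Vrule_apply_pos _ _ _ h, Vrule_apply_pos _ _ _ h,
      Vrule_apply_neg _ _ _ h', Vrule_apply_neg _ _ _ h']
    push_neg at h'
    have key : (1-p) * μ ≤ p * (1-μ) := by nlinarith
    have e1 : (1 - p) * ((1-(0:ℝ)) * (μ / max (1-μ) μ)) + p * ((1-(1:ℝ)) * (μ / max (1-μ) μ))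
        = ((1-p) * μ) / max (1-μ) μ := by ring
    have e2 : (1 - p) * ((0:ℝ) * ((1-μ) / max (1-μ) μ)) + p * ((1:ℝ) * ((1-μ) / max (1-μ) μ))
        = (p * (1-μ)) / max (1-μ) μ := by ring
    rw [e1, e2]
    exact (div_le_div_iff_of_pos_right hM).mpr key
  · rw [Vrule_apply_neg _ _ _ h, Vrule_apply_neg _ _ _ h,
      Vrule_apply_pos _ _ _ h', Vrule_apply_pos _ _ _ h']
    push_neg at h
    have key : p * (1-μ) ≤ (1-p) * μ := by nlinarith
    have e1 : (1 - p) * ((0:ℝ) * ((1-μ) / max (1-μ) μ)) + p * ((1:ℝ) * ((1-μ) / max (1-μ) μ))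
        = (p * (1-μ)) / max (1-μ) μ := by ring
    have e2 : (1 - p) * ((1-(0:ℝ)) * (μ / max (1-μ) μ)) + p * ((1-(1:ℝ)) * (μ / max (1-μ) μ))
        = ((1-p) * μ) / max (1-μ) μ := by ring
    rw [e1, e2]
    exact (div_le_div_iff_of_pos_right hM).mpr key
  · rw [Vrule_apply_neg _ _ _ h, Vrule_apply_neg _ _ _ h,
      Vrule_apply_neg _ _ _ h', Vrule_apply_neg _ _ _ h']

lemma Vrule_bdd (μ : ℝ) (hμ : μ ∈ Set.Icc (0:ℝ) 1) : BddRule (Vrule μ) := by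
  intro p _
  have hM := max_pos μ
  have h1 : (1-μ)/max (1-μ) μ ∈ Set.Icc (0:ℝ) 1 :=
    ⟨div_nonneg (by linarith [hμ.2]) hM.le, by rw [div_le_one hM]; exact le_max_left _ _⟩
  have h2 : μ/max (1-μ) μ ∈ Set.Icc (0:ℝ) 1 :=
    ⟨div_nonneg hμ.1 hM.le, by rw [div_le_one hM]; exact le_max_right _ _⟩
  by_cases h : μ ≤ p
  · rw [Vrule_apply_pos _ _ _ h, Vrule_apply_pos _ _ _ h]
    norm_num
    exact ⟨div_nonneg (by linarith [hμ.2]) hM.le, h1.2⟩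
  · rw [Vrule_apply_neg _ _ _ h, Vrule_apply_neg _ _ _ h]
    norm_num
    exact ⟨div_nonneg hμ.1 hM.le, h2.2⟩

lemma Vrule_breg (μ a b : ℝ) :
    (1 - b) * (Vrule μ b 0 - Vrule μ a 0) + b * (Vrule μ b 1 - Vrule μ a 1)
      = VBreg μ a b := by
  have hM := max_pos μ
  have hMne := ne_of_gt hM
  unfold VBreg
  by_cases h : μ ≤ a <;> by_cases h' : μ ≤ b
  · rw [Vrule_apply_pos _ _ _ h, Vrule_apply_pos _ _ _ h,
      Vrule_apply_pos _ _ _ h', Vrule_apply_pos _ _ _ h',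
      if_pos (Or.inr ⟨h, h'⟩)]
    ring
  · rw [Vrule_apply_pos _ _ _ h, Vrule_apply_pos _ _ _ h,
      Vrule_apply_neg _ _ _ h', Vrule_apply_neg _ _ _ h']
    push_neg at h'
    rw [if_neg (by rintro (⟨hc, _⟩ | ⟨_, hc⟩) <;> linarith)]
    rw [abs_of_nonpos (by linarith), neg_sub]
    field_simp
    ring
  · rw [Vrule_apply_neg _ _ _ h, Vrule_apply_neg _ _ _ h,
      Vrule_apply_pos _ _ _ h', Vrule_apply_pos _ _ _ h']
    push_neg at h
    by_cases hb : b ≤ μ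
    · have hbb : b = μ := le_antisymm hb h'
      rw [if_pos (Or.inl ⟨h, hb⟩), hbb]
      field_simp
      ring
    · push_neg at hb
      rw [if_neg (by rintro (⟨_, hc⟩ | ⟨hc, _⟩) <;> linarith)]
      rw [abs_of_nonneg (by linarith)]
      field_simp
      ring
  · rw [Vrule_apply_neg _ _ _ h, Vrule_apply_neg _ _ _ h,
      Vrule_apply_neg _ _ _ h', Vrule_apply_neg _ _ _ h']
    push_neg at h h'
    rw [if_pos (Or.inl ⟨h, h'.le⟩)]
    ring

end Stmt5Aux

open Stmt5Aux in
/-- VCDL ≤ CDL ≤ 2·VCDL. -/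
theorem stmt_5 (T m : ℕ) (hT : 0 < T)
    (q : Fin m → ℝ) (hq : ∀ i, q i ∈ Set.Icc (0:ℝ) 1)
    (n : Fin m → ℕ) (hsum : ∑ i, n i = T)
    (qh : Fin m → ℝ) (hqh : ∀ i, qh i ∈ Set.Icc (0:ℝ) 1)
    (CDL VCDL : ℝ)
    (hCDL : CDL = sSup {x : ℝ | ∃ S : ℝ → ℝ → ℝ, ProperRule S ∧ BddRule S ∧
      x = (1 / (T:ℝ)) * ∑ i, (n i : ℝ) *
        ((1 - qh i) * (S (qh i) 0 - S (q i) 0) + qh i * (S (qh i) 1 - S (q i) 1))})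
    (hVCDL : VCDL = sSup {x : ℝ | ∃ μ ∈ Set.Icc (0:ℝ) 1,
      x = (1 / (T:ℝ)) * ∑ i, (n i : ℝ) * VBreg μ (q i) (qh i)}) :
    VCDL ≤ CDL ∧ CDL ≤ 2 * VCDL := by
  have hTR : (0:ℝ) < T := by exact_mod_cast hT
  have hsumT : ∑ i, (n i : ℝ) = (T:ℝ) := by exact_mod_cast hsum
  set SB : Set ℝ := {x : ℝ | ∃ S : ℝ → ℝ → ℝ, ProperRule S ∧ BddRule S ∧
      x = (1 / (T:ℝ)) * ∑ i, (n i : ℝ) *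
        ((1 - qh i) * (S (qh i) 0 - S (q i) 0) + qh i * (S (qh i) 1 - S (q i) 1))} with hSBdef
  set SA : Set ℝ := {x : ℝ | ∃ μ ∈ Set.Icc (0:ℝ) 1,
      x = (1 / (T:ℝ)) * ∑ i, (n i : ℝ) * VBreg μ (q i) (qh i)} with hSAdef
  -- SB is bounded above by 1
  have hBddB : BddAbove SB := by
    refine ⟨1, fun x hx => ?_⟩
    obtain ⟨S, hPr, hBd, rfl⟩ := hx
    have hterm : ∀ i, (n i : ℝ) *
        ((1 - qh i) * (S (qh i) 0 - S (q i) 0) + qh i * (S (qh i) 1 - S (q i) 1))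
        ≤ (n i : ℝ) := by
      intro i
      have h1 := hBd (qh i) (hqh i)
      have h2 := hBd (q i) (hq i)
      have hq1 := (hqh i).1
      have hq2 := (hqh i).2
      have hE : (1 - qh i) * (S (qh i) 0 - S (q i) 0) + qh i * (S (qh i) 1 - S (q i) 1) ≤ 1 := by
        nlinarith [h1.1.2, h2.1.1, h1.2.2, h2.2.1]
      nlinarith [Nat.cast_nonneg (α := ℝ) (n i)]
    have hsle : ∑ i, (n i : ℝ) *
        ((1 - qh i) * (S (qh i) 0 - S (q i) 0) + qh i * (S (qh i) 1 - S (q i) 1))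
        ≤ (T:ℝ) := by
      rw [← hsumT]
      exact Finset.sum_le_sum fun i _ => hterm i
    calc (1/(T:ℝ)) * ∑ i, (n i : ℝ) *
        ((1 - qh i) * (S (qh i) 0 - S (q i) 0) + qh i * (S (qh i) 1 - S (q i) 1))
        ≤ (1/(T:ℝ)) * T := mul_le_mul_of_nonneg_left hsle (by positivity)
      _ = 1 := by field_simp
  -- SA is bounded above by 2
  have hBddA : BddAbove SA := by
    refine ⟨2, fun x hx => ?_⟩
    obtain ⟨μ, hμ, rfl⟩ := hx
    have hsle : ∑ i, (n i : ℝ) * VBreg μ (q i) (qh i) ≤ 2 * (T:ℝ) := by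
      calc ∑ i, (n i : ℝ) * VBreg μ (q i) (qh i) ≤ ∑ i, (n i : ℝ) * 2 :=
            Finset.sum_le_sum fun i _ => mul_le_mul_of_nonneg_left
              (VBreg_le_two μ (q i) (qh i) hμ (hqh i)) (Nat.cast_nonneg _)
        _ = 2 * (T:ℝ) := by rw [← Finset.sum_mul, hsumT]; ring
    calc (1/(T:ℝ)) * ∑ i, (n i : ℝ) * VBreg μ (q i) (qh i)
        ≤ (1/(T:ℝ)) * (2 * T) := mul_le_mul_of_nonneg_left hsle (by positivity)
      _ = 2 := by field_simp
  -- 0 belongs to SA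
  have h0A : (0:ℝ) ∈ SA := by
    refine ⟨0, ⟨le_refl _, zero_le_one⟩, ?_⟩
    rw [Finset.sum_eq_zero, mul_zero]
    intro i _
    have : VBreg 0 (q i) (qh i) = 0 := by
      unfold VBreg
      rw [if_pos (Or.inr ⟨(hq i).1, (hqh i).1⟩)]
    rw [this, mul_zero]
  have hAne : SA.Nonempty := ⟨0, h0A⟩
  -- SB is nonempty
  have hBne : SB.Nonempty := by
    refine ⟨0, fun _ _ => 0, ?_, ?_, ?_⟩
    · intro p _ p' _; simp
    · intro p _; norm_num
    · rw [Finset.sum_eq_zero, mul_zero]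
      intro i _; ring
  constructor
  · -- VCDL ≤ CDL
    rw [hCDL, hVCDL]
    apply csSup_le_csSup hBddB hAne
    rintro x ⟨μ, hμ, rfl⟩
    refine ⟨Vrule μ, Vrule_proper μ, Vrule_bdd μ hμ, ?_⟩
    congr 1
    exact Finset.sum_congr rfl fun i _ => by rw [Vrule_breg]
  · -- CDL ≤ 2·VCDL
    have hV0 : 0 ≤ VCDL := by
      have := le_csSup hBddA h0A
      rw [← hVCDL] at this
      exact this
    have hVB : ∀ μ ∈ Set.Icc (0:ℝ) 1,
        ∑ i, (n i : ℝ) * VBreg μ (q i) (qh i) ≤ (T:ℝ) * VCDL := by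
      intro μ hμ
      have hmem : (1/(T:ℝ)) * ∑ i, (n i : ℝ) * VBreg μ (q i) (qh i) ∈ SA := ⟨μ, hμ, rfl⟩
      have h := le_csSup hBddA hmem
      rw [← hVCDL] at h
      have h2 := mul_le_mul_of_nonneg_left h hTR.le
      calc ∑ i, (n i : ℝ) * VBreg μ (q i) (qh i)
          = (T:ℝ) * ((1/(T:ℝ)) * ∑ i, (n i : ℝ) * VBreg μ (q i) (qh i)) := by
            field_simp
        _ ≤ (T:ℝ) * VCDL := h2
    rw [hCDL]
    apply csSup_le hBne
    rintro x ⟨S, hPr, hBd, rfl⟩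
    set g : ℝ → ℝ := fun p => (1-p) * S p 0 + p * S p 1 with hgdef
    set s : ℝ → ℝ := fun p => S p 1 - S p 0 with hsdef
    have hsub : ∀ x ∈ Set.Icc (0:ℝ) 1, ∀ y ∈ Set.Icc (0:ℝ) 1,
        g x + s x * (y - x) ≤ g y := by
      intro x hx y hy
      have h := hPr y hy x hx
      calc g x + s x * (y - x) = (1-y) * S x 0 + y * S x 1 := by
            simp only [hgdef, hsdef]; ring
        _ ≤ (1-y) * S y 0 + y * S y 1 := h
        _ = g y := rfl
    have hb0 := hBd 0 ⟨le_refl _, zero_le_one⟩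
    have hb1 := hBd 1 ⟨zero_le_one, le_refl _⟩
    have hs0 : -1 ≤ s 0 := by
      simp only [hsdef]
      linarith [hb0.2.1, hb0.1.2]
    have hs1 : s 1 ≤ 1 := by
      simp only [hsdef]
      linarith [hb1.2.2, hb1.1.1]
    have hident : ∀ i, (1 - qh i) * (S (qh i) 0 - S (q i) 0) + qh i * (S (qh i) 1 - S (q i) 1)
        = g (qh i) - g (q i) - s (q i) * (qh i - q i) := by
      intro i
      simp only [hgdef, hsdef]
      ring
    have hxrw : (1 / (T:ℝ)) * ∑ i, (n i : ℝ) *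
        ((1 - qh i) * (S (qh i) 0 - S (q i) 0) + qh i * (S (qh i) 1 - S (q i) 1))
        = (1 / (T:ℝ)) * ∑ i, (n i : ℝ) *
          (g (qh i) - g (q i) - s (q i) * (qh i - q i)) := by
      congr 1
      exact Finset.sum_congr rfl fun i _ => by rw [hident]
    rw [hxrw]
    have key : ∀ ε : ℝ, 0 < ε →
        (1 / (T:ℝ)) * ∑ i, (n i : ℝ) * (g (qh i) - g (q i) - s (q i) * (qh i - q i))
          ≤ 2 * VCDL + ε := by
      intro ε hε
      obtain ⟨N, hNgt⟩ := exists_nat_gt (1/ε)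
      have hNR : (0:ℝ) < N := lt_trans (by positivity) hNgt
      have hN : 0 < N := by exact_mod_cast hNR
      have h1N : 1/(N:ℝ) ≤ ε := by
        rw [div_le_iff₀ hNR]
        have := mul_lt_mul_of_pos_left hNgt hε
        rw [mul_one_div, div_self (ne_of_gt hε)] at this
        nlinarith
      have hcore := core q qh n hq hqh g s hsub hs0 hs1 ((T:ℝ) * VCDL)
        (mul_nonneg hTR.le hV0) hVB N hN
      rw [hsumT] at hcore
      calc (1 / (T:ℝ)) * ∑ i, (n i : ℝ) * (g (qh i) - g (q i) - s (q i) * (qh i - q i))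
          ≤ (1 / (T:ℝ)) * (2 * ((T:ℝ) * VCDL) + (T:ℝ)/N) :=
            mul_le_mul_of_nonneg_left hcore (by positivity)
        _ = 2 * VCDL + 1/(N:ℝ) := by field_simp
        _ ≤ 2 * VCDL + ε := by linarith
    exact le_of_forall_pos_le_add key
end

section
/- For any proper scoring rule S : [0,1] × {0,1} → [0,1] and any sequences p_1,…,p_T ∈ [0,1] (finitely many values) and θ_1,…,θ_T ∈ {0,1}, the Calibration Fixed Decision Loss is bounded by twice the expected calibration error: CFDL_S(p⃗, θ⃗) ≤ 2·ECE(p⃗, θ⃗), where ECE = (1/T)·Σ_i n_i·|q_i − q̂_i|. -/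
/-!
Since the score is `S(p, θ) = u p + g p * (θ - p)` with values in `[0, 1]`, the subgradient
`g p = S(p, 1) - S(p, 0)` has `|g p| ≤ 1`. The subgradient inequality at `q̂` bounds
`u q̂ - u q` by `|g q̂| * |q - q̂|`, and the remaining term `g q * (q - q̂)` is at most
`|g q| * |q - q̂|`; so each bin contributes at most `2 * |q - q̂|` to the CFDL.
-/

open Set

lemma abs_le_one_of_affine_mem_Icc {a b p : ℝ} (h₀ : a + b * (0 - p) ∈ Icc (0 : ℝ) 1)
    (h₁ : a + b * (1 - p) ∈ Icc (0 : ℝ) 1) : |b| ≤ 1 := by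
  have hb : b = (a + b * (1 - p)) - (a + b * (0 - p)) := by ring
  rw [hb, ← Real.dist_eq]
  exact Real.dist_le_of_mem_Icc_01 h₁ h₀

lemma sub_add_subgradient_mul_le {u g : ℝ → ℝ} {x y : ℝ} (hsub : u y + g y * (x - y) ≤ u x) :
    u y - u x + g x * (x - y) ≤ (|g x| + |g y|) * |x - y| := by
  have hx : g x * (x - y) ≤ |g x| * |x - y| := abs_mul (g x) (x - y) ▸ le_abs_self _
  have hy : -(g y * (x - y)) ≤ |g y| * |x - y| := abs_mul (g y) (x - y) ▸ neg_le_abs _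
  linarith

theorem stmt_6_general (T m : ℕ)
    (u g : ℝ → ℝ)
    (hsub : ∀ p ∈ Set.Icc (0:ℝ) 1, ∀ r ∈ Set.Icc (0:ℝ) 1, u p + g p * (r - p) ≤ u r)
    (hbdd : ∀ p ∈ Set.Icc (0:ℝ) 1, ∀ θ : ℝ, (θ = 0 ∨ θ = 1) →
      u p + g p * (θ - p) ∈ Set.Icc (0:ℝ) 1)
    (q : Fin m → ℝ) (hq : ∀ i, q i ∈ Set.Icc (0:ℝ) 1)
    (qh : Fin m → ℝ) (hqh : ∀ i, qh i ∈ Set.Icc (0:ℝ) 1)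
    (n : Fin m → ℕ) :
    (1 / (T:ℝ)) * ∑ i, (n i : ℝ) * (u (qh i) - u (q i) + g (q i) * (q i - qh i))
      ≤ 2 * ((1 / (T:ℝ)) * ∑ i, (n i : ℝ) * |q i - qh i|) := by
  have hg : ∀ p ∈ Icc (0 : ℝ) 1, |g p| ≤ 1 := fun p hp =>
    abs_le_one_of_affine_mem_Icc (hbdd p hp 0 (.inl rfl)) (hbdd p hp 1 (.inr rfl))
  have hbin : ∀ i, u (qh i) - u (q i) + g (q i) * (q i - qh i) ≤ 2 * |q i - qh i| := fun i =>
    calc u (qh i) - u (q i) + g (q i) * (q i - qh i)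
        ≤ (|g (q i)| + |g (qh i)|) * |q i - qh i| :=
          sub_add_subgradient_mul_le (hsub _ (hqh i) _ (hq i))
      _ ≤ (1 + 1) * |q i - qh i| := by gcongr; exacts [hg _ (hq i), hg _ (hqh i)]
      _ = 2 * |q i - qh i| := by norm_num
  calc (1 / (T:ℝ)) * ∑ i, (n i : ℝ) * (u (qh i) - u (q i) + g (q i) * (q i - qh i))
      ≤ (1 / (T:ℝ)) * ∑ i, (n i : ℝ) * (2 * |q i - qh i|) := by
        gcongr with i
        exact hbin i
    _ = 2 * ((1 / (T:ℝ)) * ∑ i, (n i : ℝ) * |q i - qh i|) := by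
        simp only [Finset.mul_sum]
        exact Finset.sum_congr rfl fun i _ => by ring

/-- For a [0,1]-bounded proper scoring rule, CFDL ≤ 2·ECE. -/
theorem stmt_6 (T m : ℕ) (hT : 0 < T)
    (u g : ℝ → ℝ)
    (hconv : ConvexOn ℝ (Set.Icc (0:ℝ) 1) u)
    (hsub : ∀ p ∈ Set.Icc (0:ℝ) 1, ∀ r ∈ Set.Icc (0:ℝ) 1, u p + g p * (r - p) ≤ u r)
    (hbdd : ∀ p ∈ Set.Icc (0:ℝ) 1, ∀ θ : ℝ, (θ = 0 ∨ θ = 1) →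
      u p + g p * (θ - p) ∈ Set.Icc (0:ℝ) 1)
    (q : Fin m → ℝ) (hq : ∀ i, q i ∈ Set.Icc (0:ℝ) 1)
    (qh : Fin m → ℝ) (hqh : ∀ i, qh i ∈ Set.Icc (0:ℝ) 1)
    (n : Fin m → ℕ) (hsum : ∑ i, n i = T) :
    (1 / (T:ℝ)) * ∑ i, (n i : ℝ) * (u (qh i) - u (q i) + g (q i) * (q i - qh i))
      ≤ 2 * ((1 / (T:ℝ)) * ∑ i, (n i : ℝ) * |q i - qh i|) :=
  stmt_6_general T m u g hsub hbdd q hq qh hqh n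
end

section
/- CDL satisfies the polynomial relations ECE^2 ≤ CDL ≤ 2·ECE: for any finite-valued prediction sequence and binary state sequence, ECE(p⃗,θ⃗)^2 ≤ CDL(p⃗,θ⃗) ≤ 2·ECE(p⃗,θ⃗). -/
/-- The quadratic (Brier) scoring rule. -/
noncomputable def quadS : ℝ → ℝ → ℝ := fun p θ => 1 - (p - θ) ^ 2

lemma quad_proper : ProperRule quadS := by
  intro p hp p' hp'
  simp only [quadS]
  nlinarith [sq_nonneg (p - p')]

lemma quad_bdd : BddRule quadS := by
  intro p hp
  obtain ⟨h0, h1⟩ := hp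
  constructor <;> constructor <;> simp only [quadS] <;> nlinarith

lemma breg_le (S : ℝ → ℝ → ℝ) (hS : ProperRule S) (hB : BddRule S)
    (a b : ℝ) (ha : a ∈ Set.Icc (0:ℝ) 1) (hb : b ∈ Set.Icc (0:ℝ) 1) :
    (1 - b) * (S b 0 - S a 0) + b * (S b 1 - S a 1) ≤ 2 * |a - b| := by
  have h2 := hS a ha b hb
  obtain ⟨⟨c0, c1⟩, ⟨c2, c3⟩⟩ := hB a ha
  obtain ⟨⟨d0, d1⟩, ⟨d2, d3⟩⟩ := hB b hb
  rcases abs_cases (a - b) with ⟨he, _⟩ | ⟨he, _⟩ <;> rw [he] <;> nlinarith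

/-- ECE² ≤ CDL ≤ 2·ECE. -/
theorem stmt_9 (T m : ℕ) (hT : 0 < T)
    (q : Fin m → ℝ) (hq : ∀ i, q i ∈ Set.Icc (0:ℝ) 1)
    (n : Fin m → ℕ) (hsum : ∑ i, n i = T)
    (qh : Fin m → ℝ) (hqh : ∀ i, qh i ∈ Set.Icc (0:ℝ) 1)
    (ECE : ℝ) (hECE : ECE = (1 / (T:ℝ)) * ∑ i, (n i : ℝ) * |q i - qh i|)
    (CDL : ℝ)
    (hCDL : CDL = sSup {x : ℝ | ∃ S : ℝ → ℝ → ℝ, ProperRule S ∧ BddRule S ∧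
      x = (1 / (T:ℝ)) * ∑ i, (n i : ℝ) *
        ((1 - qh i) * (S (qh i) 0 - S (q i) 0) + qh i * (S (qh i) 1 - S (q i) 1))}) :
    ECE ^ 2 ≤ CDL ∧ CDL ≤ 2 * ECE := by
  have hTpos : (0:ℝ) < (T:ℝ) := by exact_mod_cast hT
  have hECEnn : 0 ≤ ECE := by
    rw [hECE]
    apply mul_nonneg (by positivity)
    exact Finset.sum_nonneg fun i _ => mul_nonneg (by positivity) (abs_nonneg _)
  -- the upper bound for all elements of the set
  have hub : ∀ x ∈ {x : ℝ | ∃ S : ℝ → ℝ → ℝ, ProperRule S ∧ BddRule S ∧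
      x = (1 / (T:ℝ)) * ∑ i, (n i : ℝ) *
        ((1 - qh i) * (S (qh i) 0 - S (q i) 0) + qh i * (S (qh i) 1 - S (q i) 1))},
      x ≤ 2 * ECE := by
    rintro x ⟨S, hS, hB, rfl⟩
    have hsle : ∑ i, (n i : ℝ) *
        ((1 - qh i) * (S (qh i) 0 - S (q i) 0) + qh i * (S (qh i) 1 - S (q i) 1)) ≤
        ∑ i, (n i : ℝ) * (2 * |q i - qh i|) :=
      Finset.sum_le_sum fun i _ =>
        mul_le_mul_of_nonneg_left (breg_le S hS hB (q i) (qh i) (hq i) (hqh i))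
          (by positivity)
    have e : ∑ i, (n i : ℝ) * (2 * |q i - qh i|) =
        2 * ∑ i, (n i : ℝ) * |q i - qh i| := by
      rw [Finset.mul_sum]; exact Finset.sum_congr rfl fun i _ => by ring
    rw [hECE]
    calc (1 / (T:ℝ)) * ∑ i, (n i : ℝ) *
        ((1 - qh i) * (S (qh i) 0 - S (q i) 0) + qh i * (S (qh i) 1 - S (q i) 1))
        ≤ (1 / (T:ℝ)) * ∑ i, (n i : ℝ) * (2 * |q i - qh i|) :=
          mul_le_mul_of_nonneg_left hsle (by positivity)
      _ = 2 * ((1 / (T:ℝ)) * ∑ i, (n i : ℝ) * |q i - qh i|) := by rw [e]; ring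
  -- the quadratic element
  have hmem : (1 / (T:ℝ)) * ∑ i, (n i : ℝ) * (q i - qh i) ^ 2 ∈
      {x : ℝ | ∃ S : ℝ → ℝ → ℝ, ProperRule S ∧ BddRule S ∧
      x = (1 / (T:ℝ)) * ∑ i, (n i : ℝ) *
        ((1 - qh i) * (S (qh i) 0 - S (q i) 0) + qh i * (S (qh i) 1 - S (q i) 1))} := by
    refine ⟨quadS, quad_proper, quad_bdd, ?_⟩
    congr 1
    apply Finset.sum_congr rfl
    intro i _
    simp only [quadS]
    ring
  have hbdd : BddAbove {x : ℝ | ∃ S : ℝ → ℝ → ℝ, ProperRule S ∧ BddRule S ∧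
      x = (1 / (T:ℝ)) * ∑ i, (n i : ℝ) *
        ((1 - qh i) * (S (qh i) 0 - S (q i) 0) + qh i * (S (qh i) 1 - S (q i) 1))} :=
    ⟨2 * ECE, hub⟩
  constructor
  · -- ECE^2 ≤ CDL
    have hcs : (∑ i, (n i : ℝ) * |q i - qh i|) ^ 2 ≤
        (T:ℝ) * ∑ i, (n i : ℝ) * (q i - qh i) ^ 2 := by
      have := Finset.sum_mul_sq_le_sq_mul_sq Finset.univ
        (fun i => Real.sqrt (n i)) (fun i => Real.sqrt (n i) * |q i - qh i|)
      have e1 : ∀ i : Fin m, Real.sqrt (n i) * (Real.sqrt (n i) * |q i - qh i|) =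
          (n i : ℝ) * |q i - qh i| := by
        intro i
        rw [← mul_assoc, Real.mul_self_sqrt (by positivity)]
      have e2 : ∀ i : Fin m, (Real.sqrt (n i)) ^ 2 = (n i : ℝ) := fun i =>
        Real.sq_sqrt (by positivity)
      have e3 : ∀ i : Fin m, (Real.sqrt (n i) * |q i - qh i|) ^ 2 =
          (n i : ℝ) * (q i - qh i) ^ 2 := by
        intro i
        rw [mul_pow, Real.sq_sqrt (by positivity), sq_abs]
      simp only [e1, e2, e3] at this
      calc (∑ i, (n i : ℝ) * |q i - qh i|) ^ 2 ≤
          (∑ i, (n i : ℝ)) * ∑ i, (n i : ℝ) * (q i - qh i) ^ 2 := this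
        _ = (T:ℝ) * ∑ i, (n i : ℝ) * (q i - qh i) ^ 2 := by
            rw [← Nat.cast_sum, hsum]
    have key : ECE ^ 2 ≤ (1 / (T:ℝ)) * ∑ i, (n i : ℝ) * (q i - qh i) ^ 2 := by
      rw [hECE, mul_pow]
      calc (1 / (T:ℝ)) ^ 2 * (∑ i, (n i : ℝ) * |q i - qh i|) ^ 2
          ≤ (1 / (T:ℝ)) ^ 2 * ((T:ℝ) * ∑ i, (n i : ℝ) * (q i - qh i) ^ 2) :=
            mul_le_mul_of_nonneg_left hcs (by positivity)
        _ = (1 / (T:ℝ)) * ∑ i, (n i : ℝ) * (q i - qh i) ^ 2 := by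
            field_simp
    rw [hCDL]
    exact key.trans (le_csSup hbdd hmem)
  · rw [hCDL]
    exact Real.sSup_le hub (by linarith)
end

section
/- CDL satisfies K2 ≤ CDL ≤ 2·sqrt(K2): for any finite-valued prediction sequence and binary state sequence, the ℓ2 calibration error K2 is at most CDL, and CDL is at most 2·sqrt(K2). -/
/-- K2 ≤ CDL ≤ 2·√K2. -/
theorem stmt_10 (T m : ℕ) (hT : 0 < T)
    (q : Fin m → ℝ) (hq : ∀ i, q i ∈ Set.Icc (0:ℝ) 1)
    (n : Fin m → ℕ) (hsum : ∑ i, n i = T)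
    (qh : Fin m → ℝ) (hqh : ∀ i, qh i ∈ Set.Icc (0:ℝ) 1)
    (K2 : ℝ) (hK2 : K2 = (1 / (T:ℝ)) * ∑ i, (n i : ℝ) * (q i - qh i)^2)
    (CDL : ℝ)
    (hCDL : CDL = sSup {x : ℝ | ∃ S : ℝ → ℝ → ℝ, ProperRule S ∧ BddRule S ∧
      x = (1 / (T:ℝ)) * ∑ i, (n i : ℝ) *
        ((1 - qh i) * (S (qh i) 0 - S (q i) 0) + qh i * (S (qh i) 1 - S (q i) 1))}) :
    K2 ≤ CDL ∧ CDL ≤ 2 * Real.sqrt K2 := by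
  have hTpos : (0:ℝ) < T := by exact_mod_cast hT
  -- K2 is nonnegative
  have hK2nn : 0 ≤ K2 := by
    rw [hK2]
    apply mul_nonneg (by positivity)
    exact Finset.sum_nonneg fun i _ => by positivity
  -- ECE bound : (1/T) * ∑ n|d| ≤ √K2
  have hCS : (∑ i, (n i : ℝ) * |q i - qh i|) ^ 2
      ≤ (T : ℝ) * ∑ i, (n i : ℝ) * (q i - qh i) ^ 2 := by
    have := Finset.sum_mul_sq_le_sq_mul_sq Finset.univ
      (fun i => Real.sqrt (n i)) (fun i => Real.sqrt (n i) * |q i - qh i|)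
    have h1 : ∀ i : Fin m, Real.sqrt (n i) * (Real.sqrt (n i) * |q i - qh i|)
        = (n i : ℝ) * |q i - qh i| := by
      intro i
      rw [← mul_assoc, Real.mul_self_sqrt (by positivity)]
    have h2 : ∀ i : Fin m, (Real.sqrt (n i)) ^ 2 = (n i : ℝ) := fun i =>
      Real.sq_sqrt (by positivity)
    have h3 : ∀ i : Fin m, (Real.sqrt (n i) * |q i - qh i|) ^ 2
        = (n i : ℝ) * (q i - qh i) ^ 2 := by
      intro i
      rw [mul_pow, h2, sq_abs]
    simp only [h1, h2, h3] at this
    calc (∑ i, (n i : ℝ) * |q i - qh i|) ^ 2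
        ≤ (∑ i : Fin m, (n i : ℝ)) * ∑ i, (n i : ℝ) * (q i - qh i) ^ 2 := this
      _ = (T : ℝ) * ∑ i, (n i : ℝ) * (q i - qh i) ^ 2 := by
          rw [← Nat.cast_sum, hsum]
  have hECE : (1 / (T:ℝ)) * ∑ i, (n i : ℝ) * |q i - qh i| ≤ Real.sqrt K2 := by
    rw [Real.le_sqrt (by positivity) hK2nn]
    rw [hK2, mul_pow]
    have : (1 / (T:ℝ)) ^ 2 * ((T:ℝ) * ∑ i, (n i : ℝ) * (q i - qh i) ^ 2)
        = (1 / (T:ℝ)) * ∑ i, (n i : ℝ) * (q i - qh i) ^ 2 := by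
      field_simp
    calc (1 / (T:ℝ)) ^ 2 * (∑ i, (n i : ℝ) * |q i - qh i|) ^ 2
        ≤ (1 / (T:ℝ)) ^ 2 * ((T:ℝ) * ∑ i, (n i : ℝ) * (q i - qh i) ^ 2) := by
          apply mul_le_mul_of_nonneg_left hCS (by positivity)
      _ = _ := this
  -- every element of the set is ≤ 2√K2
  have hub : ∀ x ∈ {x : ℝ | ∃ S : ℝ → ℝ → ℝ, ProperRule S ∧ BddRule S ∧
      x = (1 / (T:ℝ)) * ∑ i, (n i : ℝ) *
        ((1 - qh i) * (S (qh i) 0 - S (q i) 0) + qh i * (S (qh i) 1 - S (q i) 1))},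
      x ≤ 2 * Real.sqrt K2 := by
    rintro x ⟨S, hP, hB, rfl⟩
    have hterm : ∀ i : Fin m,
        (1 - qh i) * (S (qh i) 0 - S (q i) 0) + qh i * (S (qh i) 1 - S (q i) 1)
          ≤ 2 * |q i - qh i| := by
      intro i
      have hB2 := hP (q i) (hq i) (qh i) (hqh i)
      obtain ⟨⟨hq00, hq01⟩, ⟨hq10, hq11⟩⟩ := hB (q i) (hq i)
      obtain ⟨⟨hh00, hh01⟩, ⟨hh10, hh11⟩⟩ := hB (qh i) (hqh i)
      set Δ : ℝ := (S (qh i) 1 - S (q i) 1) - (S (qh i) 0 - S (q i) 0) with hΔ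
      have hkey : (1 - qh i) * (S (qh i) 0 - S (q i) 0) + qh i * (S (qh i) 1 - S (q i) 1)
          ≤ (qh i - q i) * Δ := by
        have B2nn : 0 ≤ (1 - q i) * (S (q i) 0 - S (qh i) 0)
            + q i * (S (q i) 1 - S (qh i) 1) := by nlinarith [hB2]
        have hsumB : ((1 - qh i) * (S (qh i) 0 - S (q i) 0) + qh i * (S (qh i) 1 - S (q i) 1))
            + ((1 - q i) * (S (q i) 0 - S (qh i) 0) + q i * (S (q i) 1 - S (qh i) 1))
            = (qh i - q i) * Δ := by rw [hΔ]; ring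
        linarith [B2nn, hsumB]
      have habs : |Δ| ≤ 2 := by
        rw [abs_le]; constructor <;> simp only [hΔ] <;> linarith
      calc (1 - qh i) * (S (qh i) 0 - S (q i) 0) + qh i * (S (qh i) 1 - S (q i) 1)
          ≤ (qh i - q i) * Δ := hkey
        _ ≤ |(qh i - q i) * Δ| := le_abs_self _
        _ = |qh i - q i| * |Δ| := abs_mul _ _
        _ ≤ |qh i - q i| * 2 := mul_le_mul_of_nonneg_left habs (abs_nonneg _)
        _ = 2 * |q i - qh i| := by rw [abs_sub_comm]; ring
    calc (1 / (T:ℝ)) * ∑ i, (n i : ℝ) *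
          ((1 - qh i) * (S (qh i) 0 - S (q i) 0) + qh i * (S (qh i) 1 - S (q i) 1))
        ≤ (1 / (T:ℝ)) * ∑ i, (n i : ℝ) * (2 * |q i - qh i|) := by
          apply mul_le_mul_of_nonneg_left _ (by positivity)
          exact Finset.sum_le_sum fun i _ =>
            mul_le_mul_of_nonneg_left (hterm i) (by positivity)
      _ = 2 * ((1 / (T:ℝ)) * ∑ i, (n i : ℝ) * |q i - qh i|) := by
          rw [Finset.mul_sum, Finset.mul_sum, Finset.mul_sum]
          ring_nf
      _ ≤ 2 * Real.sqrt K2 := by linarith [hECE]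
  -- K2 is attained by the quadratic rule
  have hmem : K2 ∈ {x : ℝ | ∃ S : ℝ → ℝ → ℝ, ProperRule S ∧ BddRule S ∧
      x = (1 / (T:ℝ)) * ∑ i, (n i : ℝ) *
        ((1 - qh i) * (S (qh i) 0 - S (q i) 0) + qh i * (S (qh i) 1 - S (q i) 1))} := by
    refine ⟨fun p θ => 1 - (p - θ)^2, ?_, ?_, ?_⟩
    · rintro p ⟨hp0, hp1⟩ p' ⟨hp'0, hp'1⟩
      dsimp only
      nlinarith [sq_nonneg (p - p')]
    · rintro p ⟨hp0, hp1⟩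
      refine ⟨⟨?_, ?_⟩, ⟨?_, ?_⟩⟩ <;> dsimp only <;> nlinarith
    · rw [hK2]
      congr 1
      exact Finset.sum_congr rfl fun i _ => by ring
  constructor
  · rw [hCDL]
    exact le_csSup ⟨2 * Real.sqrt K2, hub⟩ hmem
  · rw [hCDL]
    exact csSup_le ⟨K2, hmem⟩ hub
end

section
/- Attribution of CDL to bucket-wise biases: let m, T ≥ 2, q_i = i/m for i = 1,…,m, predictions p_1,…,p_T ∈ {q_1,…,q_m}, states θ_1,…,θ_T ∈ {0,1}, n_i and q̂_i the bucket counts and empirical frequencies, and G_i = n_i·|q̂_i − q_i|. For α, β ≥ 0, let D = max_i max(G_i − α·sqrt(n_i) − β·n_i, 0). Then CDL(p⃗, θ⃗) ≤ (4m/T)·D + 4α/sqrt(T) + 4β + C·α²·m·log(m)/T for some absolute constant C. -/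
noncomputable def Lfun (S : ℝ → ℝ → ℝ) (p r : ℝ) : ℝ := (1-p)*S r 0 + p*S r 1
noncomputable def ffun (S : ℝ → ℝ → ℝ) (r : ℝ) : ℝ := S r 1 - S r 0
noncomputable def Pfun (m : ℕ) (Q H : ℝ) (j : ℕ) : ℝ :=
  max (min ((j:ℝ)/m) (max Q H)) (min Q H)
noncomputable def stepfun (S : ℝ → ℝ → ℝ) (m : ℕ) (Q H : ℝ) (j : ℕ) : ℝ :=
  if Q ≤ H then Lfun S H (Pfun m Q H (j+1)) - Lfun S H (Pfun m Q H j)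
  else Lfun S H (Pfun m Q H j) - Lfun S H (Pfun m Q H (j+1))

lemma step_le {S : ℝ → ℝ → ℝ} (hS : ProperRule S) {p a b : ℝ}
    (ha : a ∈ Set.Icc (0:ℝ) 1) (hb : b ∈ Set.Icc (0:ℝ) 1) :
    Lfun S p b - Lfun S p a ≤ (p - a) * (ffun S b - ffun S a) := by
  have h := hS a ha b hb
  simp only [Lfun, ffun]
  nlinarith [h]

lemma f_mono {S : ℝ → ℝ → ℝ} (hS : ProperRule S) {a b : ℝ}
    (ha : a ∈ Set.Icc (0:ℝ) 1) (hb : b ∈ Set.Icc (0:ℝ) 1) (hab : a ≤ b) :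
    ffun S a ≤ ffun S b := by
  rcases eq_or_lt_of_le hab with h|h
  · subst h; exact le_refl _
  · have h1 := hS a ha b hb
    have h2 := hS b hb a ha
    simp only [ffun]
    nlinarith

lemma Pfun_mem (m : ℕ) {Q H : ℝ} (hQ : Q ∈ Set.Icc (0:ℝ) 1) (hH : H ∈ Set.Icc (0:ℝ) 1)
    (j : ℕ) : Pfun m Q H j ∈ Set.Icc (0:ℝ) 1 := by
  obtain ⟨hQ0, hQ1⟩ := hQ; obtain ⟨hH0, hH1⟩ := hH
  constructor
  · exact le_trans (le_min hQ0 hH0) (le_max_right _ _)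
  · exact max_le (le_trans (min_le_right _ _) (max_le hQ1 hH1)) (le_trans (min_le_left _ _) hQ1)

lemma tele (S : ℝ → ℝ → ℝ) (m : ℕ) (hm : 0 < m) {Q H : ℝ}
    (hQ : Q ∈ Set.Icc (0:ℝ) 1) (hH : H ∈ Set.Icc (0:ℝ) 1) :
    ∑ j ∈ Finset.range m, stepfun S m Q H j = Lfun S H H - Lfun S H Q := by
  have hm0 : (m:ℝ) ≠ 0 := by positivity
  have hP0 : Pfun m Q H 0 = min Q H := by
    simp only [Pfun, Nat.cast_zero, zero_div]
    rw [min_eq_left (le_max_of_le_left hQ.1), max_eq_right (le_min hQ.1 hH.1)]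
  have hPm : Pfun m Q H m = max Q H := by
    simp only [Pfun]
    rw [div_self hm0, min_eq_right (max_le hQ.2 hH.2),
      max_eq_left (le_trans (min_le_left _ _) (le_max_left _ _))]
  by_cases hud : Q ≤ H
  · simp only [stepfun, if_pos hud]
    rw [Finset.sum_range_sub (fun j => Lfun S H (Pfun m Q H j)), hP0, hPm,
      max_eq_right hud, min_eq_left hud]
  · simp only [stepfun, if_neg hud]
    rw [Finset.sum_range_sub' (fun j => Lfun S H (Pfun m Q H j)), hP0, hPm]
    push_neg at hud
    rw [max_eq_left hud.le, min_eq_right hud.le]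

lemma cell (S : ℝ → ℝ → ℝ) (hS : ProperRule S) (m : ℕ) (hm : 0 < m)
    {Q H N Gi : ℝ} (hQ : Q ∈ Set.Icc (0:ℝ) 1) (hH : H ∈ Set.Icc (0:ℝ) 1)
    (hN : 0 ≤ N) (hGi : Gi = N * |H - Q|)
    {k : ℕ} (hk : Q = (k:ℝ)/m) (j : ℕ) (hj : j < m) :
    N * stepfun S m Q H j ≤
      (ffun S (((j:ℝ)+1)/m) - ffun S ((j:ℝ)/m)) *
        (max (Gi - N * |Q - (j:ℝ)/m|) 0 + max (Gi - N * |Q - ((j:ℝ)+1)/m|) 0) := by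
  have hm0 : (0:ℝ) < m := by exact_mod_cast hm
  have htj : (j:ℝ)/m ∈ Set.Icc (0:ℝ) 1 := by
    constructor
    · positivity
    · rw [div_le_one hm0]; exact_mod_cast hj.le
  have htj1 : ((j:ℝ)+1)/m ∈ Set.Icc (0:ℝ) 1 := by
    constructor
    · positivity
    · rw [div_le_one hm0]
      have : (j:ℝ)+1 = ((j+1:ℕ):ℝ) := by push_cast; ring
      rw [this]; exact_mod_cast hj
  have htle : (j:ℝ)/m ≤ ((j:ℝ)+1)/m := by
    gcongr
    linarith
  have hΔf : 0 ≤ ffun S (((j:ℝ)+1)/m) - ffun S ((j:ℝ)/m) :=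
    sub_nonneg.2 (f_mono hS htj htj1 htle)
  set df := ffun S (((j:ℝ)+1)/m) - ffun S ((j:ℝ)/m) with hdf
  set M1 := max (Gi - N * |Q - (j:ℝ)/m|) 0 with hM1
  set M2 := max (Gi - N * |Q - ((j:ℝ)+1)/m|) 0 with hM2
  have hmax1 : 0 ≤ M1 := le_max_right _ _
  have hmax2 : 0 ≤ M2 := le_max_right _ _
  by_cases hud : Q ≤ H
  · -- upward bucket
    rw [stepfun, if_pos hud]
    have hlo : min Q H = Q := min_eq_left hud
    have hhi : max Q H = H := max_eq_right hud
    by_cases hA : ((j:ℝ)+1)/m ≤ Q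
    · have hPj : Pfun m Q H j = Q := by
        rw [Pfun, hhi, hlo, min_eq_left (le_trans (le_trans htle hA) hud),
          max_eq_right (le_trans htle hA)]
      have hPj1 : Pfun m Q H (j+1) = Q := by
        simp only [Pfun, Nat.cast_add, Nat.cast_one, hhi, hlo]
        rw [min_eq_left (le_trans hA hud), max_eq_right hA]
      rw [hPj1, hPj, sub_self, mul_zero]
      positivity
    · push_neg at hA
      have hQtj : Q ≤ (j:ℝ)/m := by
        rw [hk] at hA ⊢
        have h1 : (k:ℝ) < (j:ℝ) + 1 := (div_lt_div_iff_of_pos_right hm0).mp hA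
        have h2 : k < j + 1 := by exact_mod_cast h1
        have h3 : (k:ℝ) ≤ (j:ℝ) := by exact_mod_cast Nat.lt_succ_iff.mp h2
        exact (div_le_div_iff_of_pos_right hm0).mpr h3
      by_cases hB2 : H ≤ (j:ℝ)/m
      · have hPj : Pfun m Q H j = H := by
          rw [Pfun, hhi, hlo, min_eq_right hB2, max_eq_left hud]
        have hPj1 : Pfun m Q H (j+1) = H := by
          simp only [Pfun, Nat.cast_add, Nat.cast_one, hhi, hlo]
          rw [min_eq_right (le_trans hB2 htle), max_eq_left hud]
        rw [hPj1, hPj, sub_self, mul_zero]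
        positivity
      · push_neg at hB2
        have hPj : Pfun m Q H j = (j:ℝ)/m := by
          rw [Pfun, hhi, hlo, min_eq_left hB2.le, max_eq_left hQtj]
        have hPm : Pfun m Q H (j+1) ∈ Set.Icc (0:ℝ) 1 := Pfun_mem m hQ hH _
        have hPle : Pfun m Q H (j+1) ≤ ((j:ℝ)+1)/m := by
          simp only [Pfun, Nat.cast_add, Nat.cast_one, hhi, hlo]
          exact max_le (min_le_left _ _) (le_trans hQtj htle)
        have hstep := step_le hS (p := H) htj hPm
        have hfP : ffun S (Pfun m Q H (j+1)) ≤ ffun S (((j:ℝ)+1)/m) :=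
          f_mono hS hPm htj1 hPle
        have hL : Lfun S H (Pfun m Q H (j+1)) - Lfun S H ((j:ℝ)/m)
            ≤ (H - (j:ℝ)/m) * df := by
          refine le_trans hstep (mul_le_mul_of_nonneg_left ?_ (by linarith))
          rw [hdf]; linarith
        have hw : N * (H - (j:ℝ)/m) ≤ M1 := by
          rw [hM1, hGi, abs_of_nonneg (sub_nonneg.2 hud),
            abs_of_nonpos (by linarith : Q - (j:ℝ)/m ≤ 0)]
          exact le_max_of_le_left (le_of_eq (by ring))
        rw [hPj]
        calc N * (Lfun S H (Pfun m Q H (j+1)) - Lfun S H ((j:ℝ)/m))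
            ≤ N * ((H - (j:ℝ)/m) * df) := mul_le_mul_of_nonneg_left hL hN
          _ = (N * (H - (j:ℝ)/m)) * df := by ring
          _ ≤ (M1 + M2) * df := mul_le_mul_of_nonneg_right (by linarith) hΔf
          _ = df * (M1 + M2) := mul_comm _ _
  · -- downward bucket
    push_neg at hud
    rw [stepfun, if_neg (not_le.mpr hud)]
    have hlo : min Q H = H := min_eq_right hud.le
    have hhi : max Q H = Q := max_eq_left hud.le
    by_cases hA : Q ≤ (j:ℝ)/m
    · have hPj : Pfun m Q H j = Q := by
        rw [Pfun, hhi, hlo, min_eq_right hA, max_eq_left hud.le]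
      have hPj1 : Pfun m Q H (j+1) = Q := by
        simp only [Pfun, Nat.cast_add, Nat.cast_one, hhi, hlo]
        rw [min_eq_right (le_trans hA htle), max_eq_left hud.le]
      rw [hPj1, hPj, sub_self, mul_zero]
      positivity
    · push_neg at hA
      have ht1Q : ((j:ℝ)+1)/m ≤ Q := by
        rw [hk] at hA ⊢
        have h1 : (j:ℝ) < (k:ℝ) := (div_lt_div_iff_of_pos_right hm0).mp hA
        have h2 : j < k := by exact_mod_cast h1
        have h3 : (j:ℝ) + 1 ≤ (k:ℝ) := by exact_mod_cast h2
        exact (div_le_div_iff_of_pos_right hm0).mpr h3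
      by_cases hB2 : ((j:ℝ)+1)/m ≤ H
      · have hPj : Pfun m Q H j = H := by
          rw [Pfun, hhi, hlo, min_eq_left hA.le, max_eq_right (le_trans htle hB2)]
        have hPj1 : Pfun m Q H (j+1) = H := by
          simp only [Pfun, Nat.cast_add, Nat.cast_one, hhi, hlo]
          rw [min_eq_left ht1Q, max_eq_right hB2]
        rw [hPj1, hPj, sub_self, mul_zero]
        positivity
      · push_neg at hB2
        have hPj1 : Pfun m Q H (j+1) = ((j:ℝ)+1)/m := by
          simp only [Pfun, Nat.cast_add, Nat.cast_one, hhi, hlo]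
          rw [min_eq_left ht1Q, max_eq_left hB2.le]
        have hPm : Pfun m Q H j ∈ Set.Icc (0:ℝ) 1 := Pfun_mem m hQ hH _
        have hPge : (j:ℝ)/m ≤ Pfun m Q H j := by
          rw [Pfun, hhi, hlo, min_eq_left hA.le]
          exact le_max_left _ _
        have hstep := step_le hS (p := H) htj1 hPm
        have hfP : ffun S ((j:ℝ)/m) ≤ ffun S (Pfun m Q H j) :=
          f_mono hS htj hPm hPge
        have hL : Lfun S H (Pfun m Q H j) - Lfun S H (((j:ℝ)+1)/m)
            ≤ (((j:ℝ)+1)/m - H) * df := by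
          refine le_trans hstep ?_
          have e : (H - ((j:ℝ)+1)/m) * (ffun S (Pfun m Q H j) - ffun S (((j:ℝ)+1)/m))
              = (((j:ℝ)+1)/m - H) * (ffun S (((j:ℝ)+1)/m) - ffun S (Pfun m Q H j)) := by ring
          rw [e, hdf]
          apply mul_le_mul_of_nonneg_left (by linarith) (by linarith)
        have hw : N * (((j:ℝ)+1)/m - H) ≤ M2 := by
          rw [hM2, hGi, abs_of_nonpos (by linarith : H - Q ≤ 0),
            abs_of_nonneg (by linarith : (0:ℝ) ≤ Q - ((j:ℝ)+1)/m)]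
          exact le_max_of_le_left (le_of_eq (by ring))
        rw [hPj1]
        calc N * (Lfun S H (Pfun m Q H j) - Lfun S H (((j:ℝ)+1)/m))
            ≤ N * ((((j:ℝ)+1)/m - H) * df) := mul_le_mul_of_nonneg_left hL hN
          _ = (N * (((j:ℝ)+1)/m - H)) * df := by ring
          _ ≤ (M1 + M2) * df := mul_le_mul_of_nonneg_right (by linarith) hΔf
          _ = df * (M1 + M2) := mul_comm _ _

lemma rule_bound (m : ℕ) (hm : 2 ≤ m) {q qh : Fin m → ℝ} {n : Fin m → ℕ} {G : Fin m → ℝ}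
    (hq : ∀ i, q i = ((i:ℕ)+1)/(m:ℝ)) (hqh : ∀ i, qh i ∈ Set.Icc (0:ℝ) 1)
    (hG : ∀ i, G i = (n i:ℝ) * |qh i - q i|)
    {S : ℝ → ℝ → ℝ} (hS : ProperRule S) (hB : BddRule S)
    {Γ : ℝ} (hΓ0 : 0 ≤ Γ)
    (hg : ∀ j : ℕ, j ≤ m → ∑ i, max (G i - (n i:ℝ) * |q i - (j:ℝ)/m|) 0 ≤ Γ) :
    ∑ i, (n i:ℝ) * ((1 - qh i) * (S (qh i) 0 - S (q i) 0) + qh i * (S (qh i) 1 - S (q i) 1))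
      ≤ 4 * Γ := by
  have hm0 : 0 < m := by omega
  have hmr : (0:ℝ) < m := by exact_mod_cast hm0
  have hqm : ∀ i : Fin m, q i ∈ Set.Icc (0:ℝ) 1 := by
    intro i
    rw [hq i]
    constructor
    · positivity
    · rw [div_le_one hmr]
      have : ((i:ℕ):ℝ) + 1 = (((i:ℕ)+1 : ℕ):ℝ) := by push_cast; ring
      rw [this]
      exact_mod_cast i.2
  have hBreg : ∀ i : Fin m, (n i:ℝ) * ((1 - qh i) * (S (qh i) 0 - S (q i) 0)
      + qh i * (S (qh i) 1 - S (q i) 1))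
      = ∑ j ∈ Finset.range m, (n i:ℝ) * stepfun S m (q i) (qh i) j := by
    intro i
    rw [← Finset.mul_sum, tele S m hm0 (hqm i) (hqh i)]
    simp only [Lfun]
    ring
  have hΔf : ∀ j : ℕ, j < m → 0 ≤ ffun S (((j:ℝ)+1)/m) - ffun S ((j:ℝ)/m) := by
    intro j hj
    apply sub_nonneg.2
    apply f_mono hS
    · constructor
      · positivity
      · rw [div_le_one hmr]; exact_mod_cast hj.le
    · constructor
      · positivity
      · rw [div_le_one hmr]
        have : (j:ℝ) + 1 = ((j+1 : ℕ):ℝ) := by push_cast; ring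
        rw [this]; exact_mod_cast hj
    · gcongr
      linarith
  calc ∑ i, (n i:ℝ) * ((1 - qh i) * (S (qh i) 0 - S (q i) 0)
          + qh i * (S (qh i) 1 - S (q i) 1))
      = ∑ i, ∑ j ∈ Finset.range m, (n i:ℝ) * stepfun S m (q i) (qh i) j :=
        Finset.sum_congr rfl fun i _ => hBreg i
    _ = ∑ j ∈ Finset.range m, ∑ i, (n i:ℝ) * stepfun S m (q i) (qh i) j :=
        Finset.sum_comm
    _ ≤ ∑ j ∈ Finset.range m, (ffun S (((j:ℝ)+1)/m) - ffun S ((j:ℝ)/m)) * (2*Γ) := by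
        apply Finset.sum_le_sum
        intro j hj
        have hj' : j < m := Finset.mem_range.mp hj
        calc ∑ i, (n i:ℝ) * stepfun S m (q i) (qh i) j
            ≤ ∑ i : Fin m, (ffun S (((j:ℝ)+1)/m) - ffun S ((j:ℝ)/m)) *
                (max (G i - (n i:ℝ) * |q i - (j:ℝ)/m|) 0
                  + max (G i - (n i:ℝ) * |q i - ((j:ℝ)+1)/m|) 0) := by
              apply Finset.sum_le_sum
              intro i _
              have hqi : q i = (((i:ℕ)+1 : ℕ):ℝ)/m := by rw [hq i]; push_cast; ring
              exact cell S hS m hm0 (hqm i) (hqh i) (Nat.cast_nonneg _) (hG i)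
                hqi j hj'
          _ = (ffun S (((j:ℝ)+1)/m) - ffun S ((j:ℝ)/m)) *
                ((∑ i, max (G i - (n i:ℝ) * |q i - (j:ℝ)/m|) 0)
                  + ∑ i, max (G i - (n i:ℝ) * |q i - ((j:ℝ)+1)/m|) 0) := by
              rw [← Finset.mul_sum, ← Finset.sum_add_distrib]
          _ ≤ (ffun S (((j:ℝ)+1)/m) - ffun S ((j:ℝ)/m)) * (2*Γ) := by
              apply mul_le_mul_of_nonneg_left ?_ (hΔf j hj')
              have h1 := hg j hj'.le
              have h2 := hg (j+1) hj'
              push_cast at h2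
              linarith
    _ = (∑ j ∈ Finset.range m, (ffun S (((j:ℝ)+1)/m) - ffun S ((j:ℝ)/m))) * (2*Γ) := by
        rw [Finset.sum_mul]
    _ ≤ 2 * (2*Γ) := by
        have hsum : ∑ j ∈ Finset.range m, (ffun S (((j:ℝ)+1)/m) - ffun S ((j:ℝ)/m))
            = ffun S 1 - ffun S 0 := by
          have h := Finset.sum_range_sub (fun j : ℕ => ffun S ((j:ℝ)/m)) m
          simp only [Nat.cast_add, Nat.cast_one] at h
          rw [h, Nat.cast_zero, zero_div, div_self (ne_of_gt hmr)]
        rw [hsum]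
        have h0 := hB 0 (by constructor <;> norm_num)
        have h1 := hB 1 (by constructor <;> norm_num)
        have : ffun S 1 - ffun S 0 ≤ 2 := by
          simp only [ffun]
          obtain ⟨⟨a,b⟩,⟨c,d⟩⟩ := h0
          obtain ⟨⟨e,f⟩,⟨g,hh⟩⟩ := h1
          linarith
        apply mul_le_mul_of_nonneg_right this (by linarith)
    _ = 4*Γ := by ring

lemma harm_le : ∀ n : ℕ, ∑ k ∈ Finset.range n, (1:ℝ)/(k+1) ≤ 1 + Real.log n := by
  intro n
  induction n with
  | zero => simp
  | succ n ih =>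
    rcases Nat.eq_zero_or_pos n with h|h
    · subst h; simp
    · rw [Finset.sum_range_succ]
      have hn : (0:ℝ) < n := by exact_mod_cast h
      have key : (1:ℝ)/(n+1) ≤ Real.log (n+1) - Real.log n := by
        have h1 : Real.log ((n:ℝ)/(n+1)) ≤ (n:ℝ)/(n+1) - 1 :=
          Real.log_le_sub_one_of_pos (by positivity)
        rw [Real.log_div (by positivity) (by positivity)] at h1
        have : (n:ℝ)/(n+1) - 1 = -(1/(n+1)) := by field_simp; ring
        rw [this] at h1
        linarith
      push_cast
      linarith

lemma amgm (α d x : ℝ) (hd : 0 < d) (hx : 0 ≤ x) :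
    α * Real.sqrt x - x * d ≤ α^2 / (4*d) := by
  have hs := Real.sq_sqrt hx
  rw [← sub_nonneg]
  have : α^2 / (4*d) - (α * Real.sqrt x - x * d) = (α - 2*d*Real.sqrt x)^2 / (4*d) := by
    field_simp
    ring_nf
    nlinarith [hs]
  rw [this]
  positivity

lemma sum_inv_le (m : ℕ) (s : Finset (Fin m)) (w : Fin m → ℝ) (ψ : Fin m → ℕ)
    (hinj : ∀ x ∈ s, ∀ y ∈ s, ψ x = ψ y → x = y) (hlt : ∀ i ∈ s, ψ i < m)
    (hw : ∀ i ∈ s, w i = 1/((ψ i : ℝ)+1)) :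
    ∑ i ∈ s, w i ≤ 1 + Real.log m := by
  have h1 : ∑ i ∈ s, w i = ∑ k ∈ s.image ψ, 1/((k:ℝ)+1) := by
    rw [Finset.sum_image hinj]
    exact Finset.sum_congr rfl hw
  rw [h1]
  refine le_trans (Finset.sum_le_sum_of_subset_of_nonneg ?_ ?_) (harm_le m)
  · intro k hk
    rw [Finset.mem_image] at hk
    obtain ⟨i, hi, rfl⟩ := hk
    exact Finset.mem_range.mpr (hlt i hi)
  · intro k _ _
    positivity

lemma gbound (m T : ℕ) (hm : 2 ≤ m)
    {q : Fin m → ℝ} {n : Fin m → ℕ} {G : Fin m → ℝ} {α β D : ℝ}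
    (hq : ∀ i, q i = ((i:ℕ)+1)/(m:ℝ))
    (hα : 0 ≤ α) (hβ : 0 ≤ β) (hD0 : 0 ≤ D)
    (hDub : ∀ i, G i - α * Real.sqrt (n i) - β * (n i:ℝ) ≤ D)
    (hnT : ∀ i, (n i:ℝ) ≤ T) (hsumn : ∑ i, (n i:ℝ) = T)
    (j : ℕ) (hj : j ≤ m) :
    ∑ i, max (G i - (n i:ℝ) * |q i - (j:ℝ)/m|) 0
      ≤ m*D + β*T + α*Real.sqrt T + (α^2*m/2)*(1 + Real.log m) := by
  have hmr : (0:ℝ) < m := by exact_mod_cast (by omega : 0 < m)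
  set c : Fin m → ℝ := fun i =>
    if (i:ℕ)+1 = j then α*Real.sqrt T else α^2*m/(4*|((i:ℕ):ℝ)+1 - (j:ℝ)|) with hc
  have step1 : ∀ i : Fin m, max (G i - (n i:ℝ) * |q i - (j:ℝ)/m|) 0
      ≤ D + β*(n i:ℝ) + c i := by
    intro i
    by_cases heq : (i:ℕ)+1 = j
    · have hd0 : |q i - (j:ℝ)/m| = 0 := by
        rw [hq i, abs_eq_zero, sub_eq_zero]
        rw [← heq]
        push_cast
        ring
      have hs : Real.sqrt (n i) ≤ Real.sqrt T := Real.sqrt_le_sqrt (hnT i)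
      have hαs : α * Real.sqrt (n i) ≤ α * Real.sqrt T :=
        mul_le_mul_of_nonneg_left hs hα
      rw [hc]
      simp only [if_pos heq]
      apply max_le
      · have := hDub i
        rw [hd0, mul_zero]
        linarith
      · positivity
    · set e := |((i:ℕ):ℝ)+1 - (j:ℝ)| with he
      have he1 : (1:ℝ) ≤ e := by
        have hz : 1 ≤ |((i:ℕ):ℤ) + 1 - (j:ℤ)| := Int.one_le_abs (by omega)
        have hcast : ((|((i:ℕ):ℤ) + 1 - (j:ℤ)| : ℤ) : ℝ) = e := by
          rw [he]
          push_cast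
          ring_nf
        rw [← hcast]
        exact_mod_cast hz
      have he0 : (0:ℝ) < e := by linarith
      have hd : |q i - (j:ℝ)/m| = e/m := by
        rw [hq i, div_sub_div_same, abs_div, abs_of_pos hmr, he]
      have hdpos : (0:ℝ) < e/m := by positivity
      have ham := amgm α (e/m) (n i) hdpos (Nat.cast_nonneg _)
      have heq2 : α^2 / (4*(e/m)) = α^2*m/(4*e) := by
        field_simp
      rw [hc]
      simp only [if_neg heq]
      apply max_le
      · have h1 := hDub i
        rw [hd]
        rw [heq2] at ham
        linarith
      · positivity
  have step2 : ∑ i, max (G i - (n i:ℝ) * |q i - (j:ℝ)/m|) 0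
      ≤ (m:ℝ)*D + β*(T:ℝ) + ∑ i, c i := by
    calc ∑ i, max (G i - (n i:ℝ) * |q i - (j:ℝ)/m|) 0
        ≤ ∑ i, (D + β*(n i:ℝ) + c i) := Finset.sum_le_sum fun i _ => step1 i
      _ = (m:ℝ)*D + β*(T:ℝ) + ∑ i, c i := by
          rw [Finset.sum_add_distrib, Finset.sum_add_distrib, ← Finset.mul_sum, hsumn]
          simp [Finset.card_univ, mul_comm]
  have step3 : ∑ i, c i ≤ α*Real.sqrt T + (α^2*(m:ℝ)/2)*(1 + Real.log m) := by
    rw [hc]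
    rw [Finset.sum_ite]
    have hA : ∑ _i ∈ Finset.univ.filter (fun i : Fin m => (i:ℕ)+1 = j),
        α*Real.sqrt T ≤ α*Real.sqrt T := by
      rw [Finset.sum_const, nsmul_eq_mul]
      have hcard : ((Finset.univ.filter fun i : Fin m => (i:ℕ)+1 = j).card : ℝ) ≤ 1 := by
        have h1 : (Finset.univ.filter fun i : Fin m => (i:ℕ)+1 = j).card ≤ 1 := by
          apply Finset.card_le_one.mpr
          intro a ha b hb
          simp only [Finset.mem_filter] at ha hb
          apply Fin.ext
          omega
        exact_mod_cast h1
      exact mul_le_of_le_one_left (by positivity) hcard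
    have hB : ∑ i ∈ Finset.univ.filter (fun i : Fin m => ¬((i:ℕ)+1 = j)),
        α^2*(m:ℝ)/(4*|((i:ℕ):ℝ)+1 - (j:ℝ)|)
        ≤ (α^2*(m:ℝ)/2)*(1 + Real.log m) := by
      have hfac : ∀ i : Fin m, α^2*(m:ℝ)/(4*|((i:ℕ):ℝ)+1 - (j:ℝ)|)
          = (α^2*(m:ℝ)/4) * (1/|((i:ℕ):ℝ)+1 - (j:ℝ)|) := by
        intro i
        ring
      rw [Finset.sum_congr rfl (fun i _ => hfac i), ← Finset.mul_sum]
      have hS : ∑ i ∈ Finset.univ.filter (fun i : Fin m => ¬((i:ℕ)+1 = j)),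
          1/|((i:ℕ):ℝ)+1 - (j:ℝ)| ≤ 2*(1 + Real.log m) := by
        have hsplit : Finset.univ.filter (fun i : Fin m => ¬((i:ℕ)+1 = j))
            = (Finset.univ.filter fun i : Fin m => (i:ℕ)+1 < j)
              ∪ (Finset.univ.filter fun i : Fin m => j < (i:ℕ)+1) := by
          ext i
          simp only [Finset.mem_filter, Finset.mem_union, Finset.mem_univ, true_and]
          omega
        have hdisj : Disjoint (Finset.univ.filter fun i : Fin m => (i:ℕ)+1 < j)
            (Finset.univ.filter fun i : Fin m => j < (i:ℕ)+1) := by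
          rw [Finset.disjoint_left]
          intro a ha hb
          simp only [Finset.mem_filter] at ha hb
          omega
        rw [hsplit, Finset.sum_union hdisj]
        have hlt : ∑ i ∈ Finset.univ.filter (fun i : Fin m => (i:ℕ)+1 < j),
            1/|((i:ℕ):ℝ)+1 - (j:ℝ)| ≤ 1 + Real.log m := by
          apply sum_inv_le m _ _ (fun i => j - (i:ℕ) - 2)
          · intro x hx y hy hxy
            simp only [Finset.mem_filter] at hx hy
            apply Fin.ext
            omega
          · intro i hi
            simp only [Finset.mem_filter] at hi
            omega
          · intro i hi
            simp only [Finset.mem_filter, Finset.mem_univ, true_and] at hi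
            have h2 : (i:ℕ) + 2 ≤ j := by omega
            have hcast : ((j - (i:ℕ) - 2 : ℕ):ℝ) = (j:ℝ) - ((i:ℕ):ℝ) - 2 := by
              rw [Nat.sub_sub, Nat.cast_sub h2]
              push_cast
              ring
            have hlt2 : ((i:ℕ):ℝ) + 1 < (j:ℝ) := by exact_mod_cast hi
            rw [hcast, abs_of_neg (by linarith : ((i:ℕ):ℝ)+1 - (j:ℝ) < 0)]
            congr 1
            ring
        have hgt : ∑ i ∈ Finset.univ.filter (fun i : Fin m => j < (i:ℕ)+1),
            1/|((i:ℕ):ℝ)+1 - (j:ℝ)| ≤ 1 + Real.log m := by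
          apply sum_inv_le m _ _ (fun i => (i:ℕ) - j)
          · intro x hx y hy hxy
            simp only [Finset.mem_filter] at hx hy
            apply Fin.ext
            omega
          · intro i hi
            have := i.2
            omega
          · intro i hi
            simp only [Finset.mem_filter, Finset.mem_univ, true_and] at hi
            have h2 : j ≤ (i:ℕ) := by omega
            have hcast : (((i:ℕ) - j : ℕ):ℝ) = ((i:ℕ):ℝ) - (j:ℝ) := by
              rw [Nat.cast_sub h2]
            have hgt2 : (j:ℝ) ≤ ((i:ℕ):ℝ) := by exact_mod_cast h2
            rw [hcast, abs_of_pos (by linarith : (0:ℝ) < ((i:ℕ):ℝ)+1 - (j:ℝ))]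
            congr 1
            ring
        linarith
      calc α^2*(m:ℝ)/4 * ∑ i ∈ Finset.univ.filter (fun i : Fin m => ¬((i:ℕ)+1 = j)),
            1/|((i:ℕ):ℝ)+1 - (j:ℝ)|
          ≤ α^2*(m:ℝ)/4 * (2*(1 + Real.log m)) := by
            apply mul_le_mul_of_nonneg_left hS (by positivity)
        _ = (α^2*(m:ℝ)/2)*(1 + Real.log m) := by ring
    linarith
  linarith

/-- Attribution of CDL to bucket-wise biases: there is an absolute
constant C such that CDL ≤ (4m/T)·D + 4α/√T + 4β + C·α²·m·log(m)/T, where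
D = max_i (G_i − α√(n_i) − β n_i)₊. -/
theorem stmt_12 : ∃ C : ℝ, 0 < C ∧
    ∀ (m T : ℕ), 2 ≤ m → 2 ≤ T →
    ∀ (ι : Fin T → Fin m) (θ : Fin T → ℝ), (∀ t, θ t = 0 ∨ θ t = 1) →
    ∀ q : Fin m → ℝ, (∀ i, q i = ((i : ℕ) + 1) / (m : ℝ)) →
    ∀ n : Fin m → ℕ, (∀ i, n i = (Finset.univ.filter fun t => ι t = i).card) →
    ∀ qh : Fin m → ℝ, (∀ i, qh i ∈ Set.Icc (0:ℝ) 1) →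
      (∀ i, (n i : ℝ) * qh i = ∑ t ∈ Finset.univ.filter (fun t => ι t = i), θ t) →
    ∀ G : Fin m → ℝ, (∀ i, G i = (n i : ℝ) * |qh i - q i|) →
    ∀ α β : ℝ, 0 ≤ α → 0 ≤ β →
    ∀ D : ℝ,
      IsGreatest (Set.range fun i : Fin m =>
        max (G i - α * Real.sqrt (n i) - β * (n i : ℝ)) 0) D →
    ∀ CDL : ℝ,
      CDL = sSup {x : ℝ | ∃ S : ℝ → ℝ → ℝ, ProperRule S ∧ BddRule S ∧
        x = (1 / (T:ℝ)) * ∑ i, (n i : ℝ) *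
          ((1 - qh i) * (S (qh i) 0 - S (q i) 0) + qh i * (S (qh i) 1 - S (q i) 1))} →
      CDL ≤ (4 * m / (T:ℝ)) * D + 4 * α / Real.sqrt T + 4 * β
              + C * α ^ 2 * m * Real.log m / (T:ℝ) := by
  refine ⟨5, by norm_num, ?_⟩
  intro m T hm hT ι θ hθ q hq n hn qh hqh hqhs G hG α β hα hβ D hD CDL hCDL
  have hmr : (0:ℝ) < m := by exact_mod_cast (by omega : 0 < m)
  have hTr : (0:ℝ) < T := by exact_mod_cast (by omega : 0 < T)
  have hD0 : 0 ≤ D := by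
    obtain ⟨⟨i0, hi0⟩, hub⟩ := hD
    rw [← hi0]
    exact le_max_right _ _
  have hDub : ∀ i, G i - α * Real.sqrt (n i) - β * (n i:ℝ) ≤ D := by
    intro i
    exact le_trans (le_max_left _ _) (hD.2 (Set.mem_range_self i))
  have hnT : ∀ i, ((n i : ℕ):ℝ) ≤ (T:ℝ) := by
    intro i
    rw [hn i]
    have h1 := Finset.card_filter_le (Finset.univ : Finset (Fin T)) (fun t => ι t = i)
    rw [Finset.card_univ, Fintype.card_fin] at h1
    exact_mod_cast h1
  have hsumn : ∑ i, ((n i : ℕ):ℝ) = (T:ℝ) := by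
    have h := Finset.card_eq_sum_card_fiberwise
      (fun (x : Fin T) (_ : x ∈ Finset.univ) => Finset.mem_univ (ι x))
    have hnat : ∑ i, n i = T := by
      simp_rw [hn]
      rw [← h, Finset.card_univ, Fintype.card_fin]
    rw [← hnat]
    push_cast
    rfl
  have hlog0 : 0 ≤ Real.log m := Real.log_nonneg (by exact_mod_cast (by omega : 1 ≤ m))
  have hsq0 : 0 ≤ Real.sqrt T := Real.sqrt_nonneg _
  set Γ := (m:ℝ)*D + β*T + α*Real.sqrt T + (α^2*(m:ℝ)/2)*(1 + Real.log m) with hΓdef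
  have hΓ0 : 0 ≤ Γ := by
    rw [hΓdef]
    have h1 : 0 ≤ (m:ℝ)*D := mul_nonneg hmr.le hD0
    have h2 : 0 ≤ β*(T:ℝ) := mul_nonneg hβ hTr.le
    have h3 : 0 ≤ α*Real.sqrt T := mul_nonneg hα hsq0
    have h4 : 0 ≤ (α^2*(m:ℝ)/2)*(1 + Real.log m) := by
      apply mul_nonneg (by positivity)
      linarith
    linarith
  have hΓle : ∀ j : ℕ, j ≤ m → ∑ i, max (G i - (n i:ℝ) * |q i - (j:ℝ)/m|) 0 ≤ Γ :=
    fun j hj => gbound m T hm hq hα hβ hD0 hDub hnT hsumn j hj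
  have hsqT : Real.sqrt T ≠ 0 := ne_of_gt (Real.sqrt_pos.mpr hTr)
  have hmulsq : Real.sqrt T * Real.sqrt T = (T:ℝ) := Real.mul_self_sqrt hTr.le
  have hlog2 : (2:ℝ) ≤ 3 * Real.log m := by
    have h1 : Real.log 2 ≤ Real.log m := by
      apply Real.log_le_log (by norm_num)
      exact_mod_cast hm
    nlinarith [Real.log_two_gt_d9]
  have hfinal : 4*Γ/T ≤ (4 * m / (T:ℝ)) * D + 4 * α / Real.sqrt T + 4 * β
      + 5 * α ^ 2 * m * Real.log m / (T:ℝ) := by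
    have e1 : 4*Γ/T = 4*((m:ℝ)*D)/T + 4*(β*T)/T + 4*(α*Real.sqrt T)/T
        + 4*((α^2*(m:ℝ)/2)*(1 + Real.log m))/T := by
      rw [hΓdef]; ring
    have e2 : 4*((m:ℝ)*D)/T = (4 * m / (T:ℝ)) * D := by ring
    have e3 : 4*(β*(T:ℝ))/T = 4*β := by
      field_simp
    have e4 : 4*(α*Real.sqrt T)/(T:ℝ) = 4*α/Real.sqrt T := by
      rw [div_eq_div_iff (ne_of_gt hTr) hsqT]
      linear_combination 4*α*hmulsq
    have e5 : 4*((α^2*(m:ℝ)/2)*(1 + Real.log m))/T ≤ 5 * α ^ 2 * m * Real.log m / (T:ℝ) := by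
      apply (div_le_div_iff_of_pos_right hTr).mpr
      nlinarith [mul_nonneg (mul_nonneg (sq_nonneg α) hmr.le)
        (by linarith : (0:ℝ) ≤ 3*Real.log m - 2)]
    linarith
  have hRHS0 : 0 ≤ (4 * m / (T:ℝ)) * D + 4 * α / Real.sqrt T + 4 * β
      + 5 * α ^ 2 * m * Real.log m / (T:ℝ) :=
    le_trans (by positivity) hfinal
  rw [hCDL]
  apply Real.sSup_le _ hRHS0
  rintro x ⟨S, hS, hB, rfl⟩
  have key := rule_bound m hm hq hqh hG hS hB hΓ0 hΓle
  calc (1 / (T:ℝ)) * ∑ i, (n i : ℝ) *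
        ((1 - qh i) * (S (qh i) 0 - S (q i) 0) + qh i * (S (qh i) 1 - S (q i) 1))
      ≤ (1 / (T:ℝ)) * (4*Γ) := by
        apply mul_le_mul_of_nonneg_left key (by positivity)
    _ = 4*Γ/T := by ring
    _ ≤ _ := hfinal
end

section
/- For the two-bucket example with T even, predictions p_t = 1/4 for T/2 rounds (all with θ_t = 0) and p_t = 3/4 for T/2 rounds (all with θ_t = 1): ECE = 1/4 and the ℓ2 calibration error K2 = 1/16, yet there exists a V-shaped proper scoring rule (kink near 1/4) witnessing CDL ≥ 1/8; in particular CDL is bounded below by a positive constant independent of T. -/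
/-- In the two-bucket example (prediction 1/4 with empirical frequency 0,
prediction 3/4 with empirical frequency 1, each on T/2 rounds), ECE = 1/4, K2 = 1/16,
yet some V-shaped kink gives CFDL ≥ 1/8, so CDL ≥ 1/8. -/
theorem stmt_14 (T : ℕ) (hT : 0 < T) (hTe : Even T) :
    (1 / (T:ℝ)) * (((T:ℝ) / 2) * |(1/4 : ℝ) - 0| + ((T:ℝ) / 2) * |(3/4 : ℝ) - 1|) = 1/4 ∧
    (1 / (T:ℝ)) * (((T:ℝ) / 2) * ((1/4 : ℝ) - 0)^2 + ((T:ℝ) / 2) * ((3/4 : ℝ) - 1)^2) = 1/16 ∧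
    ∃ μ ∈ Set.Icc (0:ℝ) 1,
      1/8 ≤ (1 / (T:ℝ)) * (((T:ℝ) / 2) * VBreg μ (1/4) 0 + ((T:ℝ) / 2) * VBreg μ (3/4) 1) := by
  have hT' : (T:ℝ) ≠ 0 := Nat.cast_ne_zero.mpr hT.ne'
  refine ⟨?_, ?_, ⟨1/4, by norm_num, ?_⟩⟩
  · rw [show |(1/4:ℝ) - 0| = 1/4 by norm_num, show |(3/4:ℝ) - 1| = 1/4 by norm_num]
    field_simp; ring
  · field_simp; ring
  · have h1 : VBreg (1/4) (1/4) 0 = 1/3 := by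
      unfold VBreg
      rw [if_neg (by norm_num)]
      rw [show max (1 - (1/4:ℝ)) (1/4) = 3/4 by norm_num]
      rw [show |(0:ℝ) - 1/4| = 1/4 by rw [abs_sub_comm]; rw [abs_of_nonneg] <;> norm_num]; norm_num
    have h2 : VBreg (1/4) (3/4) 1 = 0 := by
      unfold VBreg; rw [if_pos (by norm_num)]
    rw [h1, h2]
    rw [show (1/(T:ℝ)) * ((T/2)*(1/3) + (T/2)*0) = 1/6 by field_simp; ring]
    norm_num
end

section
/- In the staircase example, CDL is O(1/T) while ECE is 1/√T: suppose T is a perfect square, m = √T, and for each i ∈ {1,…,m} there are n_i = √T rounds with prediction q_i where the empirical frequency satisfies |q_i − q̂_i| = 1/√T and the buckets satisfy q_i = i/√T. Then ECE = 1/√T, K2 = 1/T, and for every kink μ ∈ [0,1], the V-shaped CFDL satisfies CFDL_μ ≤ 4/T; consequently CDL ≤ 8/T. -/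
/-- At most two naturals `i+1` lie in the open interval `(x-1, x+1)`. -/
lemma aux_card_stmt15 (m : ℕ) (x : ℝ) :
    (Finset.univ.filter (fun i : Fin m => |((i:ℕ):ℝ) + 1 - x| < 1)).card ≤ 2 := by
  have h : (Finset.univ.filter (fun i : Fin m => |((i:ℕ):ℝ) + 1 - x| < 1)).card
      ≤ ({⌊x⌋, ⌊x⌋ + 1} : Finset ℤ).card := by
    refine Finset.card_le_card_of_injOn (fun i => ((i : ℕ) : ℤ) + 1) ?_ ?_
    · intro i hi
      simp only [Finset.mem_coe, Finset.mem_filter] at hi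
      obtain ⟨hlt1, hlt2⟩ := abs_lt.1 hi.2
      have hfl : ⌊x⌋ ≤ ((i:ℕ):ℤ) + 1 := by
        have hx : (⌊x⌋ : ℝ) < ((i:ℕ):ℝ) + 1 + 1 :=
          lt_of_le_of_lt (Int.floor_le x) (by linarith)
        have : (⌊x⌋ : ℤ) < ((i:ℕ):ℤ) + 2 := by exact_mod_cast hx
        omega
      have hfu : ((i:ℕ):ℤ) + 1 ≤ ⌊x⌋ + 1 := by
        have hx : (((i:ℕ):ℤ) + 1 : ℝ) < (⌊x⌋ : ℝ) + 2 := by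
          have := Int.lt_floor_add_one x
          push_cast
          linarith
        have : ((i:ℕ):ℤ) + 1 < ⌊x⌋ + 2 := by exact_mod_cast hx
        omega
      simp only [Finset.mem_coe, Finset.mem_insert, Finset.mem_singleton]
      omega
    · intro a _ b _ hab
      simp only at hab
      have : ((a:ℕ):ℤ) = ((b:ℕ):ℤ) := by omega
      exact Fin.ext (by exact_mod_cast this)
  exact h.trans ((Finset.card_insert_le _ _).trans (by simp))

/-- Telescoping sum of second differences. -/
lemma aux_tele_stmt15 (m : ℕ) (f : ℕ → ℝ) :
    ∑ i ∈ Finset.range m, (f (i+2) - f i) = f (m+1) + f m - f 1 - f 0 := by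
  have h1 : ∑ i ∈ Finset.range m, (f (i+2) - f (i+1)) = f (m+1) - f 1 := by
    have := Finset.sum_range_sub (fun j => f (j+1)) m
    simpa using this
  have h2 : ∑ i ∈ Finset.range m, (f (i+1) - f i) = f m - f 0 :=
    Finset.sum_range_sub f m
  have h3 : ∑ i ∈ Finset.range m, (f (i+2) - f i)
      = ∑ i ∈ Finset.range m, ((f (i+2) - f (i+1)) + (f (i+1) - f i)) := by
    apply Finset.sum_congr rfl; intros; ring
  rw [h3, Finset.sum_add_distrib, h1, h2]; ring

/-- The staircase example with m = √T buckets, n_i = √T and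
|q_i − q̂_i| = 1/√T has ECE = 1/√T, K2 = 1/T, CFDL_μ ≤ 4/T for all kinks μ,
and CDL ≤ 8/T. -/
theorem stmt_15 (m : ℕ) (hm : 0 < m) (T : ℕ) (hT : T = m * m)
    (q : Fin m → ℝ) (hq : ∀ i, q i = ((i : ℕ) + 1) / (m : ℝ))
    (qh : Fin m → ℝ) (hqh : ∀ i, qh i ∈ Set.Icc (0:ℝ) 1)
    (hdev : ∀ i, |q i - qh i| = 1 / (m : ℝ)) :
    (1 / (T:ℝ)) * ∑ i, (m : ℝ) * |q i - qh i| = 1 / Real.sqrt T ∧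
    (1 / (T:ℝ)) * ∑ i, (m : ℝ) * (q i - qh i)^2 = 1 / (T:ℝ) ∧
    (∀ μ ∈ Set.Icc (0:ℝ) 1,
      (1 / (T:ℝ)) * ∑ i, (m : ℝ) * VBreg μ (q i) (qh i) ≤ 4 / (T:ℝ)) ∧
    ∀ CDL : ℝ,
      CDL = sSup {x : ℝ | ∃ S : ℝ → ℝ → ℝ, ProperRule S ∧ BddRule S ∧
        x = (1 / (T:ℝ)) * ∑ i, (m : ℝ) *
          ((1 - qh i) * (S (qh i) 0 - S (q i) 0) + qh i * (S (qh i) 1 - S (q i) 1))} →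
      CDL ≤ 8 / (T:ℝ) := by
  have hm' : (0:ℝ) < m := by exact_mod_cast hm
  have hTm : ((T:ℕ):ℝ) = (m:ℝ) * m := by rw [hT]; push_cast; ring
  have hT' : (0:ℝ) < (T:ℝ) := by rw [hTm]; positivity
  -- basic membership facts
  have hqmem : ∀ i : Fin m, q i ∈ Set.Icc (0:ℝ) 1 := by
    intro i
    have h1 : ((i:ℕ):ℝ) + 1 ≤ m := by exact_mod_cast Nat.succ_le_of_lt i.isLt
    have h0 : (0:ℝ) ≤ ((i:ℕ):ℝ) + 1 := by positivity
    rw [hq i]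
    constructor
    · positivity
    · rw [div_le_one hm']; exact h1
  refine ⟨?_, ?_, ?_, ?_⟩
  · -- ECE = 1/√T
    have hsum : ∑ i : Fin m, (m : ℝ) * |q i - qh i| = m := by
      have : ∀ i : Fin m, (m : ℝ) * |q i - qh i| = 1 := by
        intro i; rw [hdev i]; field_simp
      rw [Finset.sum_congr rfl (fun i _ => this i)]
      simp
    have hsqrt : Real.sqrt (T:ℝ) = m := by
      rw [hTm]; exact Real.sqrt_mul_self hm'.le
    rw [hsum, hsqrt, hTm]
    field_simp
  · -- K2 = 1/T
    have hsum : ∑ i : Fin m, (m : ℝ) * (q i - qh i)^2 = 1 := by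
      have : ∀ i : Fin m, (m : ℝ) * (q i - qh i)^2 = 1/m := by
        intro i
        rw [← sq_abs, hdev i]
        field_simp
      rw [Finset.sum_congr rfl (fun i _ => this i)]
      rw [Finset.sum_const, Finset.card_univ, Fintype.card_fin, nsmul_eq_mul]
      field_simp
    rw [hsum, hTm, mul_one]
  · -- CFDL_μ ≤ 4/T
    intro μ hμ
    have hmax : (1:ℝ)/2 ≤ max (1 - μ) μ := by
      rcases le_total μ (1/2) with h | h
      · exact le_trans (by linarith) (le_max_left _ _)
      · exact le_trans h (le_max_right _ _)
    have hmaxpos : (0:ℝ) < max (1 - μ) μ := lt_of_lt_of_le (by norm_num) hmax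
    -- key per-bucket facts for nonzero VBreg
    have main : ∀ i : Fin m, VBreg μ (q i) (qh i) ≠ 0 →
        VBreg μ (q i) (qh i) ≤ 2/m ∧ |((i:ℕ):ℝ) + 1 - (m:ℝ)*μ| < 1 := by
      intro i hne
      unfold VBreg at hne ⊢
      by_cases hcase : (q i < μ ∧ qh i ≤ μ) ∨ (μ ≤ q i ∧ μ ≤ qh i)
      · simp [hcase] at hne
      rw [if_neg hcase]
      push_neg at hcase
      obtain ⟨h1, h2⟩ := hcase
      have hd := hdev i
      have hdd : q i - qh i = 1/(m:ℝ) ∨ q i - qh i = -(1/(m:ℝ)) := by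
        rcases abs_eq (by positivity : (0:ℝ) ≤ 1/(m:ℝ)) |>.1 hd with h | h
        · exact Or.inl h
        · exact Or.inr h
      -- derive bounds on |qh i - μ| and |q i - μ|
      have hmpos : (0:ℝ) < 1/m := by positivity
      have hbounds : |qh i - μ| ≤ 1/m ∧ |q i - μ| < 1/m := by
        rcases lt_or_ge (q i) μ with hlt | hle
        · -- q i < μ, so μ < qh i
          have hqh' : μ < qh i := h1 hlt
          have hval : q i - qh i = -(1/(m:ℝ)) := by
            rcases hdd with h | h
            · exfalso; linarith
            · exact h
          exact ⟨abs_le.2 ⟨by linarith, by linarith⟩,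
            abs_lt.2 ⟨by linarith, by linarith⟩⟩
        · -- μ ≤ q i, so qh i < μ
          have hqh' : qh i < μ := h2 hle
          have hval : q i - qh i = 1/(m:ℝ) := by
            rcases hdd with h | h
            · exact h
            · exfalso; linarith
          exact ⟨abs_le.2 ⟨by linarith, by linarith⟩,
            abs_lt.2 ⟨by linarith, by linarith⟩⟩
      constructor
      · calc |qh i - μ| / max (1 - μ) μ ≤ (1/m) / (1/2) :=
              div_le_div₀ (by positivity) hbounds.1 (by norm_num) hmax
          _ = 2/m := by ring
      · have hkey : ((i:ℕ):ℝ) + 1 - (m:ℝ)*μ = m * (q i - μ) := by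
          rw [hq i]; field_simp
        rw [hkey, abs_mul, abs_of_pos hm']
        calc (m:ℝ) * |q i - μ| < m * (1/m) :=
              mul_lt_mul_of_pos_left hbounds.2 hm'
          _ = 1 := by field_simp
    -- restrict to nonzero terms
    set s := Finset.univ.filter (fun i : Fin m => VBreg μ (q i) (qh i) ≠ 0) with hs
    have hsumeq : ∑ i : Fin m, (m : ℝ) * VBreg μ (q i) (qh i)
        = ∑ i ∈ s, (m : ℝ) * VBreg μ (q i) (qh i) := by
      symm
      apply Finset.sum_subset (Finset.filter_subset _ _)
      intro i _ hi
      simp only [hs, Finset.mem_filter, Finset.mem_univ, true_and, not_not] at hi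
      rw [hi, mul_zero]
    have hcard : s.card ≤ 2 := by
      have hsub : s ⊆ Finset.univ.filter
          (fun i : Fin m => |((i:ℕ):ℝ) + 1 - (m:ℝ)*μ| < 1) := by
        intro i hi
        simp only [hs, Finset.mem_filter, Finset.mem_univ, true_and] at hi
        simp only [Finset.mem_filter, Finset.mem_univ, true_and]
        exact (main i hi).2
      exact le_trans (Finset.card_le_card hsub) (aux_card_stmt15 m ((m:ℝ)*μ))
    have hsumle : ∑ i ∈ s, (m : ℝ) * VBreg μ (q i) (qh i) ≤ 4 := by
      have hstep : ∑ i ∈ s, (m : ℝ) * VBreg μ (q i) (qh i) ≤ ∑ _i ∈ s, (2:ℝ) := by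
        apply Finset.sum_le_sum
        intro i hi
        simp only [hs, Finset.mem_filter, Finset.mem_univ, true_and] at hi
        have := (main i hi).1
        calc (m:ℝ) * VBreg μ (q i) (qh i) ≤ m * (2/m) :=
              mul_le_mul_of_nonneg_left this hm'.le
          _ = 2 := by field_simp
      rw [Finset.sum_const, nsmul_eq_mul] at hstep
      calc ∑ i ∈ s, (m : ℝ) * VBreg μ (q i) (qh i) ≤ s.card * 2 := hstep
        _ ≤ 2 * 2 := by
            have : (s.card : ℝ) ≤ 2 := by exact_mod_cast hcard
            linarith
        _ = 4 := by norm_num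
    rw [hsumeq]
    rw [div_eq_mul_inv 4 (T:ℝ), mul_comm (4:ℝ), ← one_div]
    exact mul_le_mul_of_nonneg_left hsumle (by positivity)
  · -- CDL ≤ 8/T
    intro CDL hCDL
    rw [hCDL]
    apply Real.sSup_le
    · rintro x ⟨S, hP, hB, rfl⟩
      -- slope function; it is a monotone subgradient of the expected score
      have hmono : ∀ a ∈ Set.Icc (0:ℝ) 1, ∀ b ∈ Set.Icc (0:ℝ) 1, a ≤ b →
          S a 1 - S a 0 ≤ S b 1 - S b 0 := by
        intro a ha b hb hab
        rcases eq_or_lt_of_le hab with rfl | hlt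
        · exact le_refl _
        have h1 := hP a ha b hb
        have h2 := hP b hb a ha
        nlinarith [h1, h2, hlt]
      set f : ℕ → ℝ := fun j => S (min ((j:ℝ)/m) 1) 1 - S (min ((j:ℝ)/m) 1) 0 with hf
      have hminmem : ∀ j : ℕ, min ((j:ℝ)/m) 1 ∈ Set.Icc (0:ℝ) 1 := by
        intro j
        constructor
        · apply le_min (by positivity) (by norm_num)
        · exact min_le_right _ _
      have hfbd : ∀ j, -1 ≤ f j ∧ f j ≤ 1 := by
        intro j
        obtain ⟨h0, h1⟩ := hB _ (hminmem j)
        simp only [hf]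
        constructor <;> [linarith [h0.2, h1.1]; linarith [h0.1, h1.2]]
      -- per-round bound
      have hterm : ∀ i : Fin m,
          (1 - qh i) * (S (qh i) 0 - S (q i) 0) + qh i * (S (qh i) 1 - S (q i) 1)
            ≤ (f ((i:ℕ)+2) - f (i:ℕ)) / m := by
        intro i
        have hx := hqmem i
        have hy := hqh i
        -- Bregman bound: D ≤ (qh-q)(sl qh - sl q)
        have hbreg : (1 - qh i) * (S (qh i) 0 - S (q i) 0)
              + qh i * (S (qh i) 1 - S (q i) 1)
            ≤ (qh i - q i) * ((S (qh i) 1 - S (qh i) 0) - (S (q i) 1 - S (q i) 0)) := by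
          have := hP (q i) hx (qh i) hy
          nlinarith [this]
        have hd := hdev i
        have hdd : q i - qh i = 1/(m:ℝ) ∨ q i - qh i = -(1/(m:ℝ)) := by
          rcases abs_eq (by positivity : (0:ℝ) ≤ 1/(m:ℝ)) |>.1 hd with h | h
          · exact Or.inl h
          · exact Or.inr h
        have him : ((i:ℕ):ℝ) + 1 ≤ m := by exact_mod_cast Nat.succ_le_of_lt i.isLt
        -- f i ≤ sl of i/m, and f (i+2) ≥ sl of any point ≤ min((i+2)/m, 1)
        have hfi : f (i:ℕ) = S (((i:ℕ):ℝ)/m) 1 - S (((i:ℕ):ℝ)/m) 0 := by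
          simp only [hf]
          rw [min_eq_left (by rw [div_le_one hm']; linarith)]
        have hfimem : (((i:ℕ):ℝ)/m) ∈ Set.Icc (0:ℝ) 1 := by
          constructor
          · positivity
          · rw [div_le_one hm']; linarith
        have hupmem := hminmem ((i:ℕ)+2)
        rcases hdd with hc | hc
        · -- qh = q - 1/m = i/m
          have hyval : qh i = ((i:ℕ):ℝ)/m := by
            have h' : qh i = q i - 1/m := by linarith
            rw [h', hq i]
            field_simp
            ring
          have hsl1 : f (i:ℕ) = S (qh i) 1 - S (qh i) 0 := by rw [hfi, hyval]
          have hsl2 : S (q i) 1 - S (q i) 0 ≤ f ((i:ℕ)+2) := by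
            apply hmono (q i) hx _ hupmem
            apply le_min
            · rw [hq i]
              push_cast
              gcongr
              linarith
            · exact hx.2
          calc (1 - qh i) * (S (qh i) 0 - S (q i) 0) + qh i * (S (qh i) 1 - S (q i) 1)
              ≤ (qh i - q i) * ((S (qh i) 1 - S (qh i) 0) - (S (q i) 1 - S (q i) 0)) :=
                hbreg
            _ = (1/m) * ((S (q i) 1 - S (q i) 0) - (S (qh i) 1 - S (qh i) 0)) := by
                have : qh i - q i = -(1/(m:ℝ)) := by linarith
                rw [this]; ring
            _ ≤ (1/m) * (f ((i:ℕ)+2) - f (i:ℕ)) := by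
                apply mul_le_mul_of_nonneg_left _ (by positivity : (0:ℝ) ≤ 1/m)
                rw [hsl1]; linarith [hsl2]
            _ = (f ((i:ℕ)+2) - f (i:ℕ)) / m := by ring
        · -- qh = q + 1/m = (i+2)/m
          have hsl1 : f (i:ℕ) ≤ S (q i) 1 - S (q i) 0 := by
            rw [hfi]
            apply hmono _ hfimem _ hx
            rw [hq i]
            gcongr
            linarith
          have hsl2 : S (qh i) 1 - S (qh i) 0 ≤ f ((i:ℕ)+2) := by
            apply hmono (qh i) hy _ hupmem
            apply le_min
            · have h' : qh i = q i + 1/m := by linarith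
              rw [h', hq i]
              push_cast
              apply le_of_eq
              field_simp
              ring
            · exact hy.2
          calc (1 - qh i) * (S (qh i) 0 - S (q i) 0) + qh i * (S (qh i) 1 - S (q i) 1)
              ≤ (qh i - q i) * ((S (qh i) 1 - S (qh i) 0) - (S (q i) 1 - S (q i) 0)) :=
                hbreg
            _ = (1/m) * ((S (qh i) 1 - S (qh i) 0) - (S (q i) 1 - S (q i) 0)) := by
                have : qh i - q i = 1/(m:ℝ) := by linarith
                rw [this]
            _ ≤ (1/m) * (f ((i:ℕ)+2) - f (i:ℕ)) := by
                apply mul_le_mul_of_nonneg_left _ (by positivity : (0:ℝ) ≤ 1/m)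
                linarith [hsl1, hsl2]
            _ = (f ((i:ℕ)+2) - f (i:ℕ)) / m := by ring
      -- total bound
      have hsum4 : ∑ i : Fin m, (m : ℝ) *
          ((1 - qh i) * (S (qh i) 0 - S (q i) 0) + qh i * (S (qh i) 1 - S (q i) 1)) ≤ 4 := by
        have hstep : ∑ i : Fin m, (m : ℝ) *
            ((1 - qh i) * (S (qh i) 0 - S (q i) 0) + qh i * (S (qh i) 1 - S (q i) 1))
            ≤ ∑ i : Fin m, (f ((i:ℕ)+2) - f (i:ℕ)) := by
          apply Finset.sum_le_sum
          intro i _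
          calc (m:ℝ) * ((1 - qh i) * (S (qh i) 0 - S (q i) 0)
                + qh i * (S (qh i) 1 - S (q i) 1))
              ≤ m * ((f ((i:ℕ)+2) - f (i:ℕ)) / m) :=
                mul_le_mul_of_nonneg_left (hterm i) hm'.le
            _ = f ((i:ℕ)+2) - f (i:ℕ) := by field_simp
        have htele : ∑ i : Fin m, (f ((i:ℕ)+2) - f (i:ℕ))
            = f (m+1) + f m - f 1 - f 0 := by
          rw [Fin.sum_univ_eq_sum_range (fun j => f (j+2) - f j) m]
          exact aux_tele_stmt15 m f
        rw [htele] at hstep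
        have b1 := hfbd (m+1); have b2 := hfbd m; have b3 := hfbd 1; have b4 := hfbd 0
        linarith [hstep, b1.2, b2.2, b3.1, b4.1]
      calc (1 / (T:ℝ)) * ∑ i : Fin m, (m : ℝ) *
            ((1 - qh i) * (S (qh i) 0 - S (q i) 0) + qh i * (S (qh i) 1 - S (q i) 1))
          ≤ (1 / (T:ℝ)) * 4 := mul_le_mul_of_nonneg_left hsum4 (by positivity)
        _ ≤ (1 / (T:ℝ)) * 8 := by
            have h : (0:ℝ) < 1/(T:ℝ) := by positivity
            nlinarith
        _ = 8 / (T:ℝ) := by ring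
    · positivity
end

section
/- A prediction sequence can have arbitrarily small distance to calibration but constant CDL: let ε ∈ (0, 1/4), T even, with p_t = 1/2 + ε and θ_t = 1 for T/2 rounds, and p_t = 1/2 − ε and θ_t = 0 for T/2 rounds. Then the distance to calibration is at most ε (witnessed by the calibrated sequence predicting 1/2 everywhere), while CDL ≥ CFDL_μ for the V-Bregman kink μ = 1/2 + 2ε, which is at least 1/4 − ε; hence CDL ≥ 1/4 − ε while distCal ≤ ε. -/
def IsPerfectlyCalibrated {ι : Type*} [Fintype ι] (ph θ : ι → ℝ) : Prop :=
  ∀ v ∈ Set.range ph,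
    (∑ t, if ph t = v then θ t else 0) = v * ∑ t, if ph t = v then (1 : ℝ) else 0

theorem isPerfectlyCalibrated_const {ι : Type*} [Fintype ι] {θ : ι → ℝ} {c : ℝ}
    (h : ∑ t, θ t = c * Fintype.card ι) : IsPerfectlyCalibrated (fun _ => c) θ := by
  rintro v ⟨-, rfl⟩
  simpa using h

theorem sum_fin_ite_lt_half {T : ℕ} (hT : Even T) :
    ∑ t : Fin T, (if (t : ℕ) < T / 2 then (1 : ℝ) else 0) = T / 2 := by
  obtain ⟨k, rfl⟩ := hT
  rw [Fin.sum_univ_eq_sum_range (fun i => if i < (k + k) / 2 then (1 : ℝ) else 0),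
    Finset.sum_range_add]
  have hk : (k + k) / 2 = k := by omega
  simp only [hk, Finset.sum_ite_of_true (fun i hi => Finset.mem_range.mp hi),
    Finset.sum_ite_of_false (fun i _ => Nat.not_lt.mpr (Nat.le_add_right k i))]
  simp

theorem one_div_card_mul_sum_abs_sub {T : ℕ} (hT : 0 < T) {p : Fin T → ℝ} {c ε : ℝ}
    (h : ∀ t, |p t - c| = ε) : (1 / (T : ℝ)) * ∑ t, |p t - c| = ε := by
  simp only [h, Finset.sum_const, Finset.card_univ, Fintype.card_fin, nsmul_eq_mul]
  field_simp

theorem VBreg_eq_zero_of_lt_of_le {μ q qh : ℝ} (hq : q < μ) (hqh : qh ≤ μ) :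
    VBreg μ q qh = 0 :=
  if_pos (Or.inl ⟨hq, hqh⟩)

theorem VBreg_eq_of_lt_of_lt {μ q qh : ℝ} (hq : q < μ) (hqh : μ < qh) :
    VBreg μ q qh = (qh - μ) / max (1 - μ) μ := by
  rw [VBreg, if_neg (by rintro (⟨-, h⟩ | ⟨h, -⟩) <;> linarith), abs_of_pos (sub_pos.mpr hqh)]

theorem VBreg_one_eq_of_lt {μ q : ℝ} (hμ : 1 / 2 ≤ μ) (hμ1 : μ < 1) (hq : q < μ) :
    VBreg μ q 1 = (1 - μ) / μ := by
  rw [VBreg_eq_of_lt_of_lt hq hμ1, max_eq_right (by linarith)]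

/-- Predictions 1/2 ± ε (with states 1 resp. 0 on the corresponding
halves of the rounds) have distance to calibration at most ε (witnessed by the
calibrated sequence constantly 1/2), while the V-shaped CFDL at kink 1/2 + 2ε is
at least 1/4 − ε; hence CDL ≥ 1/4 − ε. -/
theorem stmt_16 (ε : ℝ) (hε : ε ∈ Set.Ioo (0:ℝ) (1/4)) (T : ℕ) (hT : 0 < T) (hTe : Even T)
    (p θ : Fin T → ℝ)
    (hp : ∀ t, p t = if (t : ℕ) < T / 2 then 1/2 + ε else 1/2 - ε)
    (hθ : ∀ t, θ t = if (t : ℕ) < T / 2 then 1 else 0) :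
    (∃ ph : Fin T → ℝ,
      (∀ v ∈ Set.range ph,
        (∑ t, if ph t = v then θ t else 0) = v * (∑ t, if ph t = v then (1:ℝ) else 0)) ∧
      (1 / (T:ℝ)) * ∑ t, |p t - ph t| ≤ ε) ∧
    1/4 - ε ≤ (1 / (T:ℝ)) * (((T:ℝ) / 2) * VBreg (1/2 + 2*ε) (1/2 + ε) 1
        + ((T:ℝ) / 2) * VBreg (1/2 + 2*ε) (1/2 - ε) 0) := by
  obtain ⟨hε0, hε4⟩ := hε
  have hθ_sum : ∑ t, θ t = 1 / 2 * Fintype.card (Fin T) := by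
    simp only [hθ, sum_fin_ite_lt_half hTe, Fintype.card_fin]
    ring
  have hp_dist : ∀ t, |p t - 1 / 2| = ε := fun t => by
    rw [hp t]; split_ifs <;> simp [abs_of_pos hε0]
  refine ⟨⟨fun _ => 1 / 2, isPerfectlyCalibrated_const hθ_sum,
    (one_div_card_mul_sum_abs_sub hT hp_dist).le⟩, ?_⟩
  rw [VBreg_one_eq_of_lt (by linarith) (by linarith) (by linarith),
    VBreg_eq_zero_of_lt_of_le (by linarith) (by linarith)]
  have hT0 : (T : ℝ) ≠ 0 := by positivity
  set μ := 1 / 2 + 2 * ε with hμ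
  calc 1 / 4 - ε = (1 - μ) / 2 := by ring
    _ ≤ (1 - μ) / μ / 2 := by gcongr; exact le_div_self (by linarith) (by linarith) (by linarith)
    _ = 1 / (T : ℝ) * (T / 2 * ((1 - μ) / μ) + T / 2 * 0) := by field_simp; ring
end

section
/- Azuma-based high-probability bias bound for the truthful forecaster: let (θ_t) be adapted to a filtration with θ_t ∈ {0,1}, and suppose the forecaster predicts p_t ∈ {1/m, 2/m, …, 1} where p_t is the value closest to p̃_t := E[θ_t | history before round t]. Define for each bucket i, n_i = #{t ≤ T : p_t = q_i}, G_i = |Σ_{t : p_t = q_i}(p_t − θ_t)|. Then for α ≥ 0, with probability at least 1 − 2·T·m·exp(−α²/2), simultaneously for every bucket i: G_i ≤ α·sqrt(n_i) + n_i/m. -/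
open MeasureTheory

section AzumaHelpers
open Real

lemma exp_mul_le_cosh {x : ℝ} (s : ℝ) (hx : |x| ≤ 1) :
    Real.exp (s * x) ≤ Real.cosh s + x * Real.sinh s := by
  rw [abs_le] at hx
  have h := convexOn_exp.2 (Set.mem_univ (-s)) (Set.mem_univ s)
    (by linarith : (0:ℝ) ≤ (1 - x)/2) (by linarith : (0:ℝ) ≤ (1 + x)/2) (by ring)
  simp only [smul_eq_mul] at h
  have e1 : (1 - x)/2 * (-s) + (1 + x)/2 * s = s * x := by ring
  rw [e1] at h
  rw [Real.cosh_eq, Real.sinh_eq]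
  nlinarith [h]

/-- Integrability of a bounded measurable function on a finite measure space. -/
lemma integrable_of_bdd {Ω : Type*} {m0 : MeasurableSpace Ω} {μ : Measure Ω}
    [IsFiniteMeasure μ] {f : Ω → ℝ} (hf : StronglyMeasurable f) {C : ℝ}
    (hC : ∀ ω, |f ω| ≤ C) : Integrable f μ :=
  (integrable_const C).mono' hf.aestronglyMeasurable (ae_of_all μ hC)

/-- Azuma core: exponential supermartingale bound. -/
lemma azuma_core {Ω : Type*} {m0 : MeasurableSpace Ω} (μ : Measure Ω)
    [IsProbabilityMeasure μ] (ℱ : Filtration ℕ m0) (f c : ℕ → Ω → ℝ)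
    (hc : ∀ t, StronglyMeasurable[ℱ t] (c t))
    (hc01 : ∀ t ω, c t ω = 0 ∨ c t ω = 1)
    (hf : ∀ t, StronglyMeasurable[ℱ (t + 1)] (f t))
    (hfb : ∀ t ω, |f t ω| ≤ c t ω)
    (hcond : ∀ t, μ[f t|ℱ t] =ᵐ[μ] 0) (s : ℝ) :
    ∀ T : ℕ, ∫ ω, Real.exp (s * ∑ t ∈ Finset.range T, f t ω
      - s ^ 2 / 2 * ∑ t ∈ Finset.range T, (c t ω) ^ 2) ∂μ ≤ 1 := by
  -- basic measurability/bounds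
  have hfm0 : ∀ t, StronglyMeasurable (f t) := fun t => (hf t).mono (ℱ.le _)
  have hcm0 : ∀ t, StronglyMeasurable (c t) := fun t => (hc t).mono (ℱ.le _)
  have hfb1 : ∀ t ω, |f t ω| ≤ 1 := by
    intro t ω
    rcases hc01 t ω with h | h <;> have := hfb t ω <;> rw [h] at this <;> linarith
  have hcb1 : ∀ t ω, |c t ω| ≤ 1 := by
    intro t ω; rcases hc01 t ω with h | h <;> rw [h] <;> norm_num
  -- the partial "supermartingale" value
  set g : ℕ → Ω → ℝ := fun T ω => Real.exp (s * ∑ t ∈ Finset.range T, f t ω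
      - s ^ 2 / 2 * ∑ t ∈ Finset.range T, (c t ω) ^ 2) with hg
  have hgm : ∀ T, StronglyMeasurable[ℱ T] (g T) := by
    intro T
    apply Measurable.stronglyMeasurable
    apply Measurable.exp
    apply Measurable.sub
    · exact (Finset.measurable_sum _ fun t ht =>
        ((hf t).mono (ℱ.mono (Finset.mem_range.mp ht)) : StronglyMeasurable[ℱ T] (f t)).measurable).const_mul s
    · exact ((Finset.measurable_sum _ fun t ht =>
        (((hc t).mono (ℱ.mono (Finset.mem_range.mp ht).le) : StronglyMeasurable[ℱ T] (c t)).measurable.pow_const 2))).const_mul _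
  have hgb : ∀ T ω, |g T ω| ≤ Real.exp (|s| * T + s ^ 2 / 2 * T) := by
    intro T ω
    rw [hg, abs_of_pos (Real.exp_pos _), Real.exp_le_exp]
    have h1 : |∑ t ∈ Finset.range T, f t ω| ≤ T := by
      have ha := Finset.abs_sum_le_sum_abs (fun t => f t ω) (Finset.range T)
      have hb := Finset.sum_le_sum (fun t (_ : t ∈ Finset.range T) => hfb1 t ω)
      simp only [Finset.sum_const, Finset.card_range, nsmul_eq_mul, mul_one] at hb
      linarith
    have h2 : (0:ℝ) ≤ ∑ t ∈ Finset.range T, (c t ω) ^ 2 :=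
      Finset.sum_nonneg fun t _ => sq_nonneg _
    have h3 : ∑ t ∈ Finset.range T, (c t ω) ^ 2 ≤ T := by
      have hb : ∀ t ∈ Finset.range T, (c t ω) ^ 2 ≤ (1:ℝ) := by
        intro t _
        rcases hc01 t ω with h | h <;> rw [h] <;> norm_num
      have := Finset.sum_le_sum hb
      simp only [Finset.sum_const, Finset.card_range, nsmul_eq_mul, mul_one] at this
      linarith
    have h4 : s * ∑ t ∈ Finset.range T, f t ω ≤ |s| * T := by
      calc s * ∑ t ∈ Finset.range T, f t ω ≤ |s * ∑ t ∈ Finset.range T, f t ω| := le_abs_self _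
      _ = |s| * |∑ t ∈ Finset.range T, f t ω| := abs_mul _ _
      _ ≤ |s| * T := by
          exact mul_le_mul_of_nonneg_left h1 (abs_nonneg s)
    nlinarith [sq_nonneg s]
  have hgint : ∀ T, Integrable (g T) μ := fun T =>
    integrable_of_bdd ((hgm T).mono (ℱ.le _)) (hgb T)
  intro T
  induction T with
  | zero => simp
  | succ T ih =>
    -- g (T+1) = g T * exp (s * f T - s^2/2 * (c T)^2)
    have hsplit : ∀ ω, g (T + 1) ω = g T ω * Real.exp (s * f T ω - s ^ 2 / 2 * (c T ω) ^ 2) := by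
      intro ω
      rw [hg]
      simp only [Finset.sum_range_succ]
      rw [← Real.exp_add]
      congr 1
      ring
    -- pointwise bound: exp (s f - s²/2 c²) ≤ A + B * f  with A,B as below
    set A : Ω → ℝ := fun ω => Real.exp (- (s ^ 2 / 2) * (c T ω) ^ 2) * Real.cosh (s * c T ω)
    set B : Ω → ℝ := fun ω => Real.exp (- (s ^ 2 / 2) * (c T ω) ^ 2) * Real.sinh s
    have hpt : ∀ ω, Real.exp (s * f T ω - s ^ 2 / 2 * (c T ω) ^ 2) ≤ A ω + B ω * f T ω := by
      intro ω
      rcases hc01 T ω with h | h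
      · have hf0 : f T ω = 0 := by
          have h2 := hfb T ω; rw [h] at h2
          exact abs_eq_zero.mp (le_antisymm h2 (abs_nonneg _))
        simp [A, B, h, hf0]
      · have hb := exp_mul_le_cosh (x := f T ω) s (hfb1 T ω)
        have : Real.exp (s * f T ω - s ^ 2 / 2 * (c T ω) ^ 2)
            = Real.exp (- (s ^ 2 / 2) * (c T ω) ^ 2) * Real.exp (s * f T ω) := by
          rw [← Real.exp_add]; congr 1; ring
        rw [this]
        simp only [A, B, h]
        have hexp : (0:ℝ) < Real.exp (- (s ^ 2 / 2) * 1 ^ 2) := Real.exp_pos _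
        calc Real.exp (- (s ^ 2 / 2) * 1 ^ 2) * Real.exp (s * f T ω)
            ≤ Real.exp (- (s ^ 2 / 2) * 1 ^ 2) * (Real.cosh s + f T ω * Real.sinh s) := by
              exact mul_le_mul_of_nonneg_left hb hexp.le
        _ = Real.exp (- (s ^ 2 / 2) * 1 ^ 2) * Real.cosh (s * 1)
            + Real.exp (- (s ^ 2 / 2) * 1 ^ 2) * Real.sinh s * f T ω := by
              rw [mul_one]; ring
    -- A ≤ 1
    have hA1 : ∀ ω, A ω ≤ 1 := by
      intro ω
      rcases hc01 T ω with h | h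
      · simp [A, h]
      · simp only [A, h, mul_one, one_pow]
        have := Real.cosh_le_exp_half_sq s
        have h2 : Real.exp (-(s ^ 2 / 2)) * Real.cosh s ≤
            Real.exp (-(s ^ 2 / 2)) * Real.exp (s ^ 2 / 2) :=
          mul_le_mul_of_nonneg_left this (Real.exp_pos _).le
        rw [← Real.exp_add] at h2
        simpa using h2
    have hA0 : ∀ ω, 0 ≤ A ω := fun ω =>
      mul_nonneg (Real.exp_pos _).le (Real.cosh_pos _).le
    -- measurability/bounds for A, B
    have hcM : Measurable[ℱ T] (c T) := (hc T).measurable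
    have hAm : StronglyMeasurable[ℱ T] A :=
      (((hcM.pow_const 2).const_mul _).exp.mul (hcM.const_mul s).cosh).stronglyMeasurable
    have hBm : StronglyMeasurable[ℱ T] B :=
      (((hcM.pow_const 2).const_mul _).exp.mul measurable_const).stronglyMeasurable
    have hBb : ∀ ω, |B ω| ≤ |Real.sinh s| := by
      intro ω
      rw [abs_mul]
      have h1 : |Real.exp (- (s ^ 2 / 2) * (c T ω) ^ 2)| ≤ 1 := by
        rw [abs_of_pos (Real.exp_pos _)]
        apply Real.exp_le_one_iff.mpr
        have : (0:ℝ) ≤ (c T ω) ^ 2 := sq_nonneg _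
        nlinarith [sq_nonneg s]
      nlinarith [abs_nonneg (Real.sinh s), h1, abs_nonneg (Real.exp (- (s ^ 2 / 2) * (c T ω) ^ 2))]
    -- the cross term integrates to zero
    have hGB : StronglyMeasurable[ℱ T] (fun ω => g T ω * B ω) := (hgm T).mul hBm
    set CB : ℝ := Real.exp (|s| * T + s ^ 2 / 2 * T) * |Real.sinh s| with hCB
    have hGBb : ∀ ω, |g T ω * B ω| ≤ CB := by
      intro ω
      rw [abs_mul]
      apply mul_le_mul (hgb T ω) (hBb ω) (abs_nonneg _) (Real.exp_pos _).le
    have hcross : ∫ ω, (g T ω * B ω) * f T ω ∂μ = 0 := by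
      have hint : Integrable (fun ω => (g T ω * B ω) * f T ω) μ := by
        apply integrable_of_bdd (((hGB.mono (ℱ.le T))).mul (hfm0 T)) (C := |CB|)
        intro ω
        simp only [Pi.mul_apply]
        rw [abs_mul]
        calc |g T ω * B ω| * |f T ω| ≤ |CB| * 1 := by
              apply mul_le_mul _ (hfb1 T ω) (abs_nonneg _) (abs_nonneg _)
              exact (hGBb ω).trans (le_abs_self _)
        _ = |CB| := mul_one _
      have hle : ℱ T ≤ m0 := ℱ.le T
      have hpull : μ[(fun ω => g T ω * B ω) * f T|ℱ T] =ᵐ[μ]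
          (fun ω => g T ω * B ω) * μ[f T|ℱ T] := by
        apply condExp_mul_of_stronglyMeasurable_left hGB
        · exact hint
        · exact integrable_of_bdd (hfm0 T) (hfb1 T)
      have h0 : (fun ω => g T ω * B ω) * μ[f T|ℱ T] =ᵐ[μ] 0 := by
        filter_upwards [hcond T] with ω hω
        simp [hω]
      calc ∫ ω, (g T ω * B ω) * f T ω ∂μ
          = ∫ ω, (μ[(fun ω => g T ω * B ω) * f T|ℱ T]) ω ∂μ :=
            (integral_condExp hle (f := (fun ω => g T ω * B ω) * f T)).symm
      _ = ∫ ω, (0:Ω → ℝ) ω ∂μ := integral_congr_ae (hpull.trans h0)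
      _ = 0 := by simp
    -- put it together
    have hmain : ∀ ω, g (T+1) ω ≤ g T ω * A ω + (g T ω * B ω) * f T ω := by
      intro ω
      rw [hsplit ω]
      have hg0 : 0 ≤ g T ω := (Real.exp_pos _).le
      calc g T ω * Real.exp (s * f T ω - s ^ 2 / 2 * (c T ω) ^ 2)
          ≤ g T ω * (A ω + B ω * f T ω) := mul_le_mul_of_nonneg_left (hpt ω) hg0
      _ = g T ω * A ω + (g T ω * B ω) * f T ω := by ring
    have hintGA : Integrable (fun ω => g T ω * A ω) μ := by
      apply integrable_of_bdd ((hgm T).mono (ℱ.le T) |>.mul (hAm.mono (ℱ.le T)))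
        (C := Real.exp (|s| * T + s ^ 2 / 2 * T))
      intro ω
      simp only [Pi.mul_apply]
      rw [abs_mul]
      calc |g T ω| * |A ω| ≤ Real.exp (|s| * T + s ^ 2 / 2 * T) * 1 := by
            apply mul_le_mul (hgb T ω) _ (abs_nonneg _) (Real.exp_pos _).le
            rw [abs_of_nonneg (hA0 ω)]; exact hA1 ω
      _ = _ := mul_one _
    have hintGBf : Integrable (fun ω => (g T ω * B ω) * f T ω) μ := by
      apply integrable_of_bdd (((hGB.mono (ℱ.le T))).mul (hfm0 T)) (C := |CB|)
      intro ω
      simp only [Pi.mul_apply]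
      rw [abs_mul]
      calc |g T ω * B ω| * |f T ω| ≤ |CB| * 1 := by
            apply mul_le_mul _ (hfb1 T ω) (abs_nonneg _) (abs_nonneg _)
            exact (hGBb ω).trans (le_abs_self _)
      _ = |CB| := mul_one _
    calc ∫ ω, g (T+1) ω ∂μ ≤ ∫ ω, (g T ω * A ω + (g T ω * B ω) * f T ω) ∂μ := by
          apply integral_mono (hgint (T+1)) (hintGA.add hintGBf) hmain
    _ = ∫ ω, g T ω * A ω ∂μ + ∫ ω, (g T ω * B ω) * f T ω ∂μ :=
          integral_add hintGA hintGBf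
    _ = ∫ ω, g T ω * A ω ∂μ := by rw [hcross, add_zero]
    _ ≤ ∫ ω, g T ω ∂μ := by
          apply integral_mono hintGA (hgint T)
          intro ω
          calc g T ω * A ω ≤ g T ω * 1 :=
            mul_le_mul_of_nonneg_left (hA1 ω) (Real.exp_pos _).le
          _ = g T ω := mul_one _
    _ ≤ 1 := ih

open ProbabilityTheory in
lemma azuma_tail {Ω : Type*} {m0 : MeasurableSpace Ω} (μ : Measure Ω)
    [IsProbabilityMeasure μ] (ℱ : Filtration ℕ m0) (f c : ℕ → Ω → ℝ)
    (hc : ∀ t, StronglyMeasurable[ℱ t] (c t))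
    (hc01 : ∀ t ω, c t ω = 0 ∨ c t ω = 1)
    (hf : ∀ t, StronglyMeasurable[ℱ (t + 1)] (f t))
    (hfb : ∀ t ω, |f t ω| ≤ c t ω)
    (hcond : ∀ t, μ[f t|ℱ t] =ᵐ[μ] 0) (T k : ℕ) (hk : 1 ≤ k)
    (hV : ∀ ω, ∑ t ∈ Finset.range T, (c t ω) ^ 2 ≤ (k : ℝ))
    (α : ℝ) (hα : 0 ≤ α) :
    μ {ω | α * Real.sqrt k < |∑ t ∈ Finset.range T, f t ω|}
      ≤ ENNReal.ofReal (2 * Real.exp (-α ^ 2 / 2)) := by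
  have hk0 : (0:ℝ) < k := by exact_mod_cast hk
  have hsk : (0:ℝ) < Real.sqrt k := Real.sqrt_pos.mpr hk0
  set s : ℝ := α / Real.sqrt k with hs_def
  have hs : 0 ≤ s := div_nonneg hα hsk.le
  have hfb1 : ∀ t ω, |f t ω| ≤ 1 := by
    intro t ω
    rcases hc01 t ω with h | h <;> have := hfb t ω <;> rw [h] at this <;> linarith
  have hfm0 : ∀ t, StronglyMeasurable (f t) := fun t => (hf t).mono (ℱ.le _)
  -- the exponent identity
  have hexp_id : -s * (α * Real.sqrt k) + s ^ 2 * k / 2 = -α ^ 2 / 2 := by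
    have h1 : Real.sqrt k * Real.sqrt k = k := Real.mul_self_sqrt hk0.le
    have hs2 : s * Real.sqrt k = α := by rw [hs_def]; exact div_mul_cancel₀ α hsk.ne'
    linear_combination ((s * Real.sqrt k - α) / 2) * hs2 + (-s ^ 2 / 2) * h1
  -- generic mgf bound for a sign ± :
  have key : ∀ g : ℕ → Ω → ℝ, (∀ t, StronglyMeasurable[ℱ (t + 1)] (g t)) →
      (∀ t ω, |g t ω| ≤ c t ω) → (∀ t, μ[g t|ℱ t] =ᵐ[μ] 0) →
      μ {ω | α * Real.sqrt k ≤ ∑ t ∈ Finset.range T, g t ω}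
        ≤ ENNReal.ofReal (Real.exp (-α ^ 2 / 2)) := by
    intro g hgm hgb hgc
    have hgb1 : ∀ t ω, |g t ω| ≤ 1 := by
      intro t ω
      rcases hc01 t ω with h | h <;> have := hgb t ω <;> rw [h] at this <;> linarith
    set S : Ω → ℝ := fun ω => ∑ t ∈ Finset.range T, g t ω with hS
    have hSm : StronglyMeasurable S :=
      Finset.stronglyMeasurable_fun_sum _ fun t _ => (hgm t).mono (ℱ.le _)
    have hSb : ∀ ω, |S ω| ≤ (T:ℝ) := by
      intro ω
      have ha := Finset.abs_sum_le_sum_abs (fun t => g t ω) (Finset.range T)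
      have hb := Finset.sum_le_sum (fun t (_ : t ∈ Finset.range T) => hgb1 t ω)
      simp only [Finset.sum_const, Finset.card_range, nsmul_eq_mul, mul_one] at hb
      exact ha.trans hb
    have hint : Integrable (fun ω => Real.exp (s * S ω)) μ := by
      apply integrable_of_bdd (hSm.measurable.const_mul s).exp.stronglyMeasurable
        (C := Real.exp (s * T))
      intro ω
      rw [abs_of_pos (Real.exp_pos _), Real.exp_le_exp]
      calc s * S ω ≤ s * |S ω| := mul_le_mul_of_nonneg_left (le_abs_self _) hs
      _ ≤ s * T := mul_le_mul_of_nonneg_left (hSb ω) hs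
    have hmgf : mgf S μ s ≤ Real.exp (s ^ 2 * k / 2) := by
      have hcore := azuma_core μ ℱ g c hc hc01 hgm hgb hgc s T
      have hptw : ∀ ω, Real.exp (s * S ω) ≤
          Real.exp (s * S ω - s ^ 2 / 2 * ∑ t ∈ Finset.range T, (c t ω) ^ 2)
            * Real.exp (s ^ 2 * k / 2) := by
        intro ω
        rw [← Real.exp_add, Real.exp_le_exp]
        have h2 := hV ω
        nlinarith [sq_nonneg s]
      have hint2 : Integrable (fun ω => Real.exp (s * S ω
          - s ^ 2 / 2 * ∑ t ∈ Finset.range T, (c t ω) ^ 2)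
            * Real.exp (s ^ 2 * k / 2)) μ := by
        apply integrable_of_bdd
        · apply StronglyMeasurable.mul _ stronglyMeasurable_const
          apply Measurable.stronglyMeasurable
          apply Measurable.exp
          apply Measurable.sub (hSm.measurable.const_mul s)
          exact (Finset.measurable_sum _ fun t _ =>
            ((hc t).mono (ℱ.le _)).measurable.pow_const 2).const_mul _
        · intro ω
          rw [abs_mul, abs_of_pos (Real.exp_pos _), abs_of_pos (Real.exp_pos _),
            ← Real.exp_add, Real.exp_le_exp (y := s * T + s ^ 2 * k / 2)]
          have h2 : (0:ℝ) ≤ ∑ t ∈ Finset.range T, (c t ω) ^ 2 :=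
            Finset.sum_nonneg fun t _ => sq_nonneg _
          have h4 : s * S ω ≤ s * T := by
            calc s * S ω ≤ s * |S ω| := mul_le_mul_of_nonneg_left (le_abs_self _) hs
            _ ≤ s * T := mul_le_mul_of_nonneg_left (hSb ω) hs
          nlinarith [sq_nonneg s]
      calc mgf S μ s = ∫ ω, Real.exp (s * S ω) ∂μ := rfl
      _ ≤ ∫ ω, Real.exp (s * S ω - s ^ 2 / 2 * ∑ t ∈ Finset.range T, (c t ω) ^ 2)
            * Real.exp (s ^ 2 * k / 2) ∂μ := integral_mono hint hint2 hptw
      _ = (∫ ω, Real.exp (s * S ω - s ^ 2 / 2 * ∑ t ∈ Finset.range T, (c t ω) ^ 2) ∂μ)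
            * Real.exp (s ^ 2 * k / 2) := integral_mul_const _ _
      _ ≤ 1 * Real.exp (s ^ 2 * k / 2) :=
            mul_le_mul_of_nonneg_right hcore (Real.exp_pos _).le
      _ = Real.exp (s ^ 2 * k / 2) := one_mul _
    have hcher := measure_ge_le_exp_mul_mgf (μ := μ) (X := S) (ε := α * Real.sqrt k) hs hint
    have hfinal : (μ {ω | α * Real.sqrt k ≤ S ω}).toReal ≤ Real.exp (-α ^ 2 / 2) := by
      calc (μ {ω | α * Real.sqrt k ≤ S ω}).toReal
          ≤ Real.exp (-s * (α * Real.sqrt k)) * mgf S μ s := hcher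
      _ ≤ Real.exp (-s * (α * Real.sqrt k)) * Real.exp (s ^ 2 * k / 2) :=
            mul_le_mul_of_nonneg_left hmgf (Real.exp_pos _).le
      _ = Real.exp (-s * (α * Real.sqrt k) + s ^ 2 * k / 2) := (Real.exp_add _ _).symm
      _ = Real.exp (-α ^ 2 / 2) := by rw [hexp_id]
    rw [ENNReal.le_ofReal_iff_toReal_le (measure_ne_top μ _) (Real.exp_pos _).le]
    exact hfinal
  -- combine the two tails
  have hsub : {ω | α * Real.sqrt k < |∑ t ∈ Finset.range T, f t ω|} ⊆
      {ω | α * Real.sqrt k ≤ ∑ t ∈ Finset.range T, f t ω} ∪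
      {ω | α * Real.sqrt k ≤ ∑ t ∈ Finset.range T, (fun t ω => -f t ω) t ω} := by
    intro ω hω
    simp only [Set.mem_setOf_eq] at hω
    rcases abs_cases (∑ t ∈ Finset.range T, f t ω) with ⟨he, _⟩ | ⟨he, _⟩
    · left; simp only [Set.mem_setOf_eq]; rw [he] at hω; linarith
    · right; simp only [Set.mem_setOf_eq, Finset.sum_neg_distrib]
      rw [he] at hω; linarith
  have h1 := key f hf hfb hcond
  have h2 := key (fun t ω => -f t ω) (fun t => (hf t).neg)
    (fun t ω => by rw [abs_neg]; exact hfb t ω)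
    (fun t => (condExp_neg (μ := μ) (m := ℱ t) (f t)).trans
      (by filter_upwards [hcond t] with ω hω; simp [hω]))
  calc μ {ω | α * Real.sqrt k < |∑ t ∈ Finset.range T, f t ω|}
      ≤ μ ({ω | α * Real.sqrt k ≤ ∑ t ∈ Finset.range T, f t ω} ∪
        {ω | α * Real.sqrt k ≤ ∑ t ∈ Finset.range T, (fun t ω => -f t ω) t ω}) :=
        measure_mono hsub
  _ ≤ μ {ω | α * Real.sqrt k ≤ ∑ t ∈ Finset.range T, f t ω} +
        μ {ω | α * Real.sqrt k ≤ ∑ t ∈ Finset.range T, (fun t ω => -f t ω) t ω} :=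
        measure_union_le _ _
  _ ≤ ENNReal.ofReal (Real.exp (-α ^ 2 / 2)) + ENNReal.ofReal (Real.exp (-α ^ 2 / 2)) :=
        add_le_add h1 h2
  _ = ENNReal.ofReal (2 * Real.exp (-α ^ 2 / 2)) := by
        rw [← ENNReal.ofReal_add (Real.exp_pos _).le (Real.exp_pos _).le]
        congr 1; ring

section Counting
variable {T k : ℕ} (b : ℕ → Prop) [DecidablePred b]

lemma cnt_succ_of (t : ℕ) (hb : b t) :
    ((Finset.range (t + 1)).filter b).card = ((Finset.range t).filter b).card + 1 := by
  rw [Finset.range_add_one, Finset.filter_insert, if_pos hb,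
    Finset.card_insert_of_notMem (by simp)]

lemma cnt_mono {s t : ℕ} (h : s ≤ t) :
    ((Finset.range s).filter b).card ≤ ((Finset.range t).filter b).card :=
  Finset.card_le_card (Finset.filter_subset_filter b (Finset.range_subset_range.mpr h))

lemma count_filter_lt_le :
    ((Finset.range T).filter fun t => b t ∧ ((Finset.range t).filter b).card < k).card
      ≤ k := by
  classical
  have := Finset.card_le_card_of_injOn (fun t => ((Finset.range t).filter b).card)
    (s := (Finset.range T).filter fun t => b t ∧ ((Finset.range t).filter b).card < k)
    (t := Finset.range k) ?_ ?_
  · simpa using this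
  · intro t ht
    simp only [Finset.mem_coe, Finset.mem_filter, Finset.mem_range] at ht ⊢
    exact ht.2.2
  · intro s hs t ht heq
    simp only [Finset.coe_filter, Set.mem_setOf_eq, Finset.mem_range] at hs ht
    simp only at heq
    by_contra hst
    rcases lt_trichotomy s t with h | h | h
    · have h1 := cnt_succ_of b s hs.2.1
      have h2 := cnt_mono b (show s + 1 ≤ t by omega)
      omega
    · exact hst h
    · have h1 := cnt_succ_of b t ht.2.1
      have h2 := cnt_mono b (show t + 1 ≤ s by omega)
      omega

lemma filter_cnt_eq (hcard : ((Finset.range T).filter b).card = k) :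
    (Finset.range T).filter (fun t => b t ∧ ((Finset.range t).filter b).card < k)
      = (Finset.range T).filter b := by
  apply Finset.Subset.antisymm
  · exact Finset.monotone_filter_right _ (fun t _ h => h.1)
  · intro t ht
    simp only [Finset.mem_filter, Finset.mem_range] at ht ⊢
    refine ⟨ht.1, ht.2, ?_⟩
    have h1 := cnt_succ_of b t ht.2
    have h2 := cnt_mono b (show t + 1 ≤ T by omega)
    omega

end Counting

end AzumaHelpers

/-- Azuma-based high-probability bias bound for the truthful forecaster:
if the prediction `p t` is the rounding (to the grid {1/m,…,1}) of the conditional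
expectation `pt t = E[θ t | ℱ t]`, then with probability at least
1 − 2·T·m·exp(−α²/2), every bucket i satisfies G_i ≤ α·√(n_i) + n_i/m. -/
theorem stmt_17 {Ω : Type*} {m0 : MeasurableSpace Ω} (μ : Measure Ω)
    [IsProbabilityMeasure μ] (ℱ : Filtration ℕ m0)
    (T m : ℕ) (hm : 0 < m) (hT : 0 < T)
    (θ p pt : ℕ → Ω → ℝ)
    (hθmeas : ∀ t, StronglyMeasurable[ℱ (t + 1)] (θ t))
    (hθval : ∀ t ω, θ t ω = 0 ∨ θ t ω = 1)
    (hpt : ∀ t, pt t =ᵐ[μ] μ[θ t | ℱ t])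
    (hpmeas : ∀ t, StronglyMeasurable[ℱ t] (p t))
    (hgrid : ∀ t ω, ∃ i : Fin m, p t ω = ((i : ℕ) + 1) / (m : ℝ))
    (hround : ∀ t ω, |p t ω - pt t ω| ≤ 1 / (m : ℝ))
    (n : Fin m → Ω → ℕ)
    (hn : ∀ i ω, n i ω =
      ((Finset.range T).filter fun t => p t ω = ((i : ℕ) + 1) / (m : ℝ)).card)
    (G : Fin m → Ω → ℝ)
    (hG : ∀ i ω, G i ω =
      |∑ t ∈ (Finset.range T).filter (fun t => p t ω = ((i : ℕ) + 1) / (m : ℝ)),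
        (p t ω - θ t ω)|)
    (α : ℝ) (hα : 0 ≤ α) :
    ENNReal.ofReal (1 - 2 * T * m * Real.exp (-α ^ 2 / 2))
      ≤ μ {ω | ∀ i : Fin m, G i ω ≤ α * Real.sqrt (n i ω) + (n i ω : ℝ) / m} := by
  classical
  -- truncated conditional expectation
  set ptc : ℕ → Ω → ℝ := fun t ω => max 0 (min 1 ((μ[θ t|ℱ t]) ω)) with hptc
  have hptcm : ∀ t, StronglyMeasurable[ℱ t] (ptc t) := fun t =>
    (measurable_const.max (measurable_const.min
      (stronglyMeasurable_condExp (m := ℱ t)).measurable)).stronglyMeasurable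
  have hptc0 : ∀ t ω, 0 ≤ ptc t ω := fun t ω => le_max_left _ _
  have hptc1 : ∀ t ω, ptc t ω ≤ 1 := fun t ω => max_le zero_le_one (min_le_left _ _)
  have hθb : ∀ t ω, |θ t ω| ≤ 1 := by
    intro t ω; rcases hθval t ω with h | h <;> rw [h] <;> norm_num
  have hθint : ∀ t, Integrable (θ t) μ := fun t =>
    integrable_of_bdd ((hθmeas t).mono (ℱ.le _)) (hθb t)
  have hptcint : ∀ t, Integrable (ptc t) μ := fun t =>
    integrable_of_bdd ((hptcm t).mono (ℱ.le _)) (fun ω => by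
      rw [abs_of_nonneg (hptc0 t ω)]; exact hptc1 t ω)
  have hptc_ae : ∀ t, ptc t =ᵐ[μ] μ[θ t|ℱ t] := by
    intro t
    have h0 : 0 ≤ᵐ[μ] μ[θ t|ℱ t] :=
      condExp_nonneg (ae_of_all μ fun ω => by rcases hθval t ω with h | h <;> rw [h] <;> norm_num)
    have h1 : μ[θ t|ℱ t] ≤ᵐ[μ] fun _ => (1:ℝ) := by
      have := condExp_mono (μ := μ) (m := ℱ t) (hθint t) (integrable_const 1)
        (ae_of_all μ fun ω => by rcases hθval t ω with h | h <;> rw [h] <;> norm_num)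
      refine this.trans ?_
      rw [condExp_const (ℱ.le t)]
    filter_upwards [h0, h1] with ω hω0 hω1
    have hω0' : (0:ℝ) ≤ (μ[θ t|ℱ t]) ω := hω0
    have hω1' : (μ[θ t|ℱ t]) ω ≤ 1 := hω1
    show max 0 (min 1 ((μ[θ t|ℱ t]) ω)) = (μ[θ t|ℱ t]) ω
    rw [min_eq_right hω1', max_eq_right hω0']
  have hpt_ptc : ∀ t, pt t =ᵐ[μ] ptc t := fun t => (hpt t).trans (hptc_ae t).symm
  -- bucket machinery
  set q : Fin m → ℝ := fun i => ((i : ℕ) + 1) / (m : ℝ) with hq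
  set cnt : Fin m → ℕ → Ω → ℕ :=
    fun i t ω => ((Finset.range t).filter fun s => p s ω = q i).card with hcnt
  set cf : Fin m → ℕ → ℕ → Ω → ℝ :=
    fun i k t ω => if p t ω = q i ∧ cnt i t ω < k then 1 else 0 with hcf
  set ff : Fin m → ℕ → ℕ → Ω → ℝ :=
    fun i k t ω => cf i k t ω * (θ t ω - ptc t ω) with hff
  set S : Fin m → ℕ → Ω → ℝ := fun i k ω => ∑ t ∈ Finset.range T, ff i k t ω with hS
  have hcntm : ∀ i t, Measurable[ℱ t] (cnt i t) := by
    intro i t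
    have he : cnt i t = fun ω => ∑ s ∈ Finset.range t, if p s ω = q i then 1 else 0 := by
      funext ω
      simp only [hcnt]
      exact Finset.card_filter _ _
    rw [he]
    apply Finset.measurable_sum
    intro s hs
    have hps : MeasurableSet[ℱ t] {ω | p s ω = q i} :=
      measurableSet_eq_fun
        ((hpmeas s).mono (ℱ.mono (Finset.mem_range.mp hs).le)).measurable measurable_const
    exact Measurable.ite hps measurable_const measurable_const
  have hcfm : ∀ i k t, StronglyMeasurable[ℱ t] (cf i k t) := by
    intro i k t
    have hps : MeasurableSet[ℱ t] {ω | p t ω = q i ∧ cnt i t ω < k} := by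
      apply MeasurableSet.inter
      · exact measurableSet_eq_fun (hpmeas t).measurable measurable_const
      · exact (hcntm i t) (measurableSet_Iio (a := k))
    exact (Measurable.ite hps measurable_const measurable_const).stronglyMeasurable
  have hcf01 : ∀ i k t ω, cf i k t ω = 0 ∨ cf i k t ω = 1 := by
    intro i k t ω
    simp only [hcf]
    by_cases h : p t ω = q i ∧ cnt i t ω < k
    · right; simp [h]
    · left; simp [h]
  have hffb : ∀ i k t ω, |ff i k t ω| ≤ cf i k t ω := by
    intro i k t ω
    simp only [hff]
    rw [abs_mul]
    rcases hcf01 i k t ω with h | h <;> rw [h]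
    · simp
    · rw [abs_one, one_mul]
      rw [abs_le]
      have h1 := hptc0 t ω
      have h2 := hptc1 t ω
      rcases hθval t ω with h3 | h3 <;> rw [h3] <;> constructor <;> linarith
  have hffm : ∀ i k t, StronglyMeasurable[ℱ (t + 1)] (ff i k t) := by
    intro i k t
    exact ((hcfm i k t).mono (ℱ.mono t.le_succ)).mul
      ((hθmeas t).sub ((hptcm t).mono (ℱ.mono t.le_succ)))
  have hcond : ∀ i k t, μ[ff i k t|ℱ t] =ᵐ[μ] 0 := by
    intro i k t
    have hsub : μ[θ t - ptc t|ℱ t] =ᵐ[μ] 0 := by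
      have h1 := condExp_sub (μ := μ) (m := ℱ t) (hθint t) (hptcint t)
      have h2 : μ[ptc t|ℱ t] = ptc t :=
        condExp_of_stronglyMeasurable (ℱ.le t) (hptcm t) (hptcint t)
      rw [h2] at h1
      refine h1.trans ?_
      filter_upwards [hptc_ae t] with ω hω
      simp only [Pi.sub_apply, Pi.zero_apply]
      rw [← hω]
      ring
    have hprod : Integrable (cf i k t * (θ t - ptc t)) μ := by
      apply integrable_of_bdd (((hcfm i k t).mono (ℱ.le t)).mul
        (((hθmeas t).mono (ℱ.le _)).sub ((hptcm t).mono (ℱ.le t)))) (C := 1)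
      intro ω
      simp only [Pi.mul_apply, Pi.sub_apply]
      calc |cf i k t ω * (θ t ω - ptc t ω)| = |ff i k t ω| := by simp only [hff]
      _ ≤ cf i k t ω := hffb i k t ω
      _ ≤ 1 := by rcases hcf01 i k t ω with h | h <;> rw [h] <;> norm_num
    have hpull := condExp_mul_of_stronglyMeasurable_left (μ := μ) (hcfm i k t) hprod
      ((hθint t).sub (hptcint t))
    have : μ[ff i k t|ℱ t] =ᵐ[μ] μ[cf i k t * (θ t - ptc t)|ℱ t] := by
      apply condExp_congr_ae
      filter_upwards with ω
      simp [hff]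
    refine this.trans (hpull.trans ?_)
    filter_upwards [hsub] with ω hω
    simp only [Pi.mul_apply, Pi.zero_apply] at hω ⊢
    rw [hω, mul_zero]
  have hVle : ∀ i (k : ℕ) ω, ∑ t ∈ Finset.range T, (cf i k t ω) ^ 2 ≤ (k : ℝ) := by
    intro i k ω
    have h1 : ∀ t, (cf i k t ω) ^ 2 = if p t ω = q i ∧ cnt i t ω < k then (1:ℝ) else 0 := by
      intro t
      by_cases h : p t ω = q i ∧ cnt i t ω < k <;> simp [hcf, h]
    calc ∑ t ∈ Finset.range T, (cf i k t ω) ^ 2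
        = ∑ t ∈ Finset.range T, if p t ω = q i ∧ cnt i t ω < k then (1:ℝ) else 0 :=
          Finset.sum_congr rfl fun t _ => h1 t
    _ = (((Finset.range T).filter fun t => p t ω = q i ∧ cnt i t ω < k).card : ℝ) :=
          Finset.sum_boole _ _
    _ ≤ (k : ℝ) := by
          have := count_filter_lt_le (T := T) (k := k) (fun s => p s ω = q i)
          exact_mod_cast this
  -- the bad events
  have hbad : ∀ i (k : ℕ), 1 ≤ k →
      μ {ω | α * Real.sqrt k < |S i k ω|} ≤ ENNReal.ofReal (2 * Real.exp (-α ^ 2 / 2)) := by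
    intro i k hk
    exact azuma_tail μ ℱ (ff i k) (cf i k) (hcfm i k) (hcf01 i k) (hffm i k)
      (hffb i k) (hcond i k) T k hk (hVle i k) α hα
  set Bad : Fin m × Fin T → Set Ω :=
    fun j => {ω | α * Real.sqrt ((j.2 : ℕ) + 1 : ℕ) < |S j.1 ((j.2 : ℕ) + 1) ω|} with hBad
  have hUle : μ (⋃ j, Bad j) ≤ ENNReal.ofReal (2 * T * m * Real.exp (-α ^ 2 / 2)) := by
    calc μ (⋃ j, Bad j) ≤ ∑' j, μ (Bad j) := measure_iUnion_le _
    _ ≤ ∑' (_ : Fin m × Fin T), ENNReal.ofReal (2 * Real.exp (-α ^ 2 / 2)) :=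
        ENNReal.tsum_le_tsum fun j => hbad j.1 ((j.2 : ℕ) + 1) (Nat.le_add_left _ _)
    _ = (Fintype.card (Fin m × Fin T)) * ENNReal.ofReal (2 * Real.exp (-α ^ 2 / 2)) := by
        rw [tsum_fintype]
        simp [Finset.sum_const, nsmul_eq_mul]
    _ = ENNReal.ofReal (2 * T * m * Real.exp (-α ^ 2 / 2)) := by
        rw [Fintype.card_prod, Fintype.card_fin, Fintype.card_fin]
        rw [← ENNReal.ofReal_natCast (m * T), ← ENNReal.ofReal_mul (Nat.cast_nonneg _)]
        congr 1
        push_cast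
        ring
  -- measurability of the union
  have hSmeas : ∀ i k, Measurable (S i k) := by
    intro i k
    simp only [hS]
    apply Finset.measurable_sum
    intro t _
    exact (((hcfm i k t).mono (ℱ.le t)).measurable).mul
      ((((hθmeas t).mono (ℱ.le _)).measurable).sub (((hptcm t).mono (ℱ.le t)).measurable))
  have hBadm : ∀ j, MeasurableSet (Bad j) := by
    intro j
    exact measurableSet_lt measurable_const (hSmeas _ _).abs
  have hUm : MeasurableSet (⋃ j, Bad j) := MeasurableSet.iUnion hBadm
  -- the good event is contained in the target
  have hinc : ∀ ω, (∀ t, pt t ω = ptc t ω) → ω ∈ (⋃ j, Bad j)ᶜ →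
      ∀ i : Fin m, G i ω ≤ α * Real.sqrt (n i ω) + (n i ω : ℝ) / m := by
    intro ω hωN hωU i
    simp only [Set.mem_compl_iff, Set.mem_iUnion, not_exists] at hωU
    have hkcard : ((Finset.range T).filter fun t => p t ω = q i).card = n i ω :=
      (hn i ω).symm
    have hkT : n i ω ≤ T := by
      rw [hn i ω]
      calc ((Finset.range T).filter fun t => p t ω = q i).card
          ≤ (Finset.range T).card := Finset.card_filter_le _ _
      _ = T := Finset.card_range T
    rcases Nat.eq_zero_or_pos (n i ω) with hk0 | hkpos
    · have hempty : ((Finset.range T).filter fun t => p t ω = q i) = ∅ :=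
        Finset.card_eq_zero.mp (by rw [hkcard, hk0])
      rw [hG i ω]
      have hempty' : ((Finset.range T).filter fun t => p t ω = ((i:ℕ)+1)/(m:ℝ)) = ∅ := hempty
      rw [hempty', Finset.sum_empty, abs_zero, hk0]
      simp
    · -- the nonzero case
      set k := n i ω with hkdef
      have hj : k - 1 < T := by omega
      have hω1 := hωU (i, ⟨k - 1, hj⟩)
      simp only [hBad] at hω1
      simp only [Set.mem_setOf_eq, not_lt] at hω1
      have hk1 : k - 1 + 1 = k := by omega
      rw [hk1] at hω1
      -- hω1 : |S i k ω| ≤ α * sqrt k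
      have hfeq : (Finset.range T).filter
            (fun t => p t ω = q i ∧ ((Finset.range t).filter fun s => p s ω = q i).card < k)
          = (Finset.range T).filter (fun t => p t ω = q i) :=
        filter_cnt_eq _ hkcard
      have hSsum : S i k ω = ∑ t ∈ (Finset.range T).filter (fun t => p t ω = q i),
          (θ t ω - ptc t ω) := by
        simp only [hS]
        rw [← hfeq, Finset.sum_filter]
        apply Finset.sum_congr rfl
        intro t _
        simp only [hff, hcf]
        by_cases h : p t ω = q i ∧ cnt i t ω < k
        · rw [if_pos h, if_pos]
          · ring
          · exact h
        · rw [if_neg h, if_neg]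
          · ring
          · exact h
      -- bound G
      have hB1 : ∀ t ∈ (Finset.range T).filter (fun t => p t ω = q i),
          |p t ω - ptc t ω| ≤ 1 / (m : ℝ) := by
        intro t _
        rw [← hωN t]
        exact hround t ω
      have habs : |∑ t ∈ (Finset.range T).filter (fun t => p t ω = q i),
          (p t ω - ptc t ω)| ≤ (k : ℝ) / m := by
        calc |∑ t ∈ (Finset.range T).filter (fun t => p t ω = q i), (p t ω - ptc t ω)|
            ≤ ∑ t ∈ (Finset.range T).filter (fun t => p t ω = q i), |p t ω - ptc t ω| :=
              Finset.abs_sum_le_sum_abs _ _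
        _ ≤ ∑ _t ∈ (Finset.range T).filter (fun t => p t ω = q i), (1 / (m:ℝ)) :=
              Finset.sum_le_sum hB1
        _ = (k : ℝ) / m := by
              rw [Finset.sum_const, hkcard, nsmul_eq_mul]
              ring
      rw [hG i ω]
      have hsplit2 : ∑ t ∈ (Finset.range T).filter (fun t => p t ω = q i), (p t ω - θ t ω)
          = (∑ t ∈ (Finset.range T).filter (fun t => p t ω = q i), (p t ω - ptc t ω))
            - S i k ω := by
        rw [hSsum, ← Finset.sum_sub_distrib]
        apply Finset.sum_congr rfl
        intro t _
        ring
      calc |∑ t ∈ (Finset.range T).filter (fun t => p t ω = q i), (p t ω - θ t ω)|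
          ≤ |∑ t ∈ (Finset.range T).filter (fun t => p t ω = q i), (p t ω - ptc t ω)|
            + |S i k ω| := by
            rw [hsplit2]
            exact abs_sub _ _
      _ ≤ (k : ℝ) / m + α * Real.sqrt k := add_le_add habs hω1
      _ = α * Real.sqrt (n i ω) + (n i ω : ℝ) / m := by rw [← hkdef]; ring
  -- final assembly
  have hae : ∀ᵐ ω ∂μ, ∀ t, pt t ω = ptc t ω := ae_all_iff.mpr hpt_ptc
  set N : Set Ω := {ω | ∀ t, pt t ω = ptc t ω} with hN
  have hNnull : μ Nᶜ = 0 := by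
    rw [ae_iff] at hae
    convert hae using 2
    rfl
  have hsub2 : (⋃ j, Bad j)ᶜ ∩ N ⊆
      {ω | ∀ i : Fin m, G i ω ≤ α * Real.sqrt (n i ω) + (n i ω : ℝ) / m} := by
    intro ω hω
    exact hinc ω hω.2 hω.1
  have hx0 : 0 ≤ 2 * T * m * Real.exp (-α ^ 2 / 2) := by positivity
  calc ENNReal.ofReal (1 - 2 * T * m * Real.exp (-α ^ 2 / 2))
      = 1 - ENNReal.ofReal (2 * T * m * Real.exp (-α ^ 2 / 2)) := by
        rw [ENNReal.ofReal_sub _ hx0, ENNReal.ofReal_one]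
  _ ≤ 1 - μ (⋃ j, Bad j) := tsub_le_tsub_left hUle 1
  _ = μ (⋃ j, Bad j)ᶜ := (prob_compl_eq_one_sub hUm).symm
  _ = μ ((⋃ j, Bad j)ᶜ ∩ N) := by
        rw [measure_inter_conull' (measure_mono_null (fun ω hω => hω.2) hNnull)]
  _ ≤ μ {ω | ∀ i : Fin m, G i ω ≤ α * Real.sqrt (n i ω) + (n i ω : ℝ) / m} :=
        measure_mono hsub2
end
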